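/- arXiv:1810.00655 — 5 statements merged into one kernel-verified Lean document; each statement's English description precedes it below -/
import Mathlib

section
/- With the notation below, for any two distinct indices a, b ∈ {1,2,3}, the commutator of any two elements of p_{ab} lies in the direct sum p_a ⊕ p_b: [p_{ab}, p_{ab}] ⊆ p_a ⊕ p_b. -/
open Matrix

/-- Total size `n = k₁ + k₂ + k₃`. -/
abbrev blockTotal (k : Fin 3 → ℕ) : ℕ := k 0 + k 1 + k 2

/-- The block to which the index `i ∈ Fin n` belongs, for row/column blocks of sizes
`k 0, k 1, k 2`. -/
def blockOf (k : Fin 3 → ℕ) (i : Fin (blockTotal k)) : Fin 3 :=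
  if (i : ℕ) < k 0 then 0 else if (i : ℕ) < k 0 + k 1 then 1 else 2

/-- The subspace of the compact symplectic Lie algebra `sp(n)` (realized as `2n × 2n` complex
matrices `Z = [[X, −conj Y], [Y, conj X]]` with `X` skew-Hermitian and `Y` complex symmetric)
consisting of those `Z` for which the only possibly nonzero `n × n`-blocks of `X` and of `Y`
are the blocks `(a, b)` with `(a, b) ∈ S`. -/
def spBlockSet (k : Fin 3 → ℕ) (S : Set (Fin 3 × Fin 3)) :
    Set (Matrix (Fin (blockTotal k) ⊕ Fin (blockTotal k))
      (Fin (blockTotal k) ⊕ Fin (blockTotal k)) ℂ) :=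
  { Z | ∃ X Y : Matrix (Fin (blockTotal k)) (Fin (blockTotal k)) ℂ,
      Xᴴ = -X ∧ Yᵀ = Y ∧
      (∀ i j, X i j ≠ 0 → (blockOf k i, blockOf k j) ∈ S) ∧
      (∀ i j, Y i j ≠ 0 → (blockOf k i, blockOf k j) ∈ S) ∧
      Z = Matrix.fromBlocks X (-(Y.map (starRingEnd ℂ))) Y (X.map (starRingEnd ℂ)) }

/-- The subspace `p_a ⊆ sp(n)`: the only possibly nonzero blocks of `X` and `Y` are their
`(a, a)` blocks. -/
def pDiag (k : Fin 3 → ℕ) (a : Fin 3) := spBlockSet k {(a, a)}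

/-- The subspace `p_{ab} ⊆ sp(n)` (for `a ≠ b`): the only possibly nonzero blocks of `X` and
`Y` are their `(a, b)` and `(b, a)` blocks. -/
def pOff (k : Fin 3 → ℕ) (a b : Fin 3) := spBlockSet k {(a, b), (b, a)}

private lemma mapConj_mapConj {n : ℕ} (A : Matrix (Fin n) (Fin n) ℂ) :
    (A.map (starRingEnd ℂ)).map (starRingEnd ℂ) = A := by
  ext i j; simp

private lemma mapConj_add {n : ℕ} (A B : Matrix (Fin n) (Fin n) ℂ) :
    (A + B).map (starRingEnd ℂ) = A.map (starRingEnd ℂ) + B.map (starRingEnd ℂ) := by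
  ext i j; simp

private lemma mapConj_sub {n : ℕ} (A B : Matrix (Fin n) (Fin n) ℂ) :
    (A - B).map (starRingEnd ℂ) = A.map (starRingEnd ℂ) - B.map (starRingEnd ℂ) := by
  ext i j; simp

private lemma supp_mul {n : ℕ} (bk : Fin n → Fin 3) (a b : Fin 3) (hab : a ≠ b)
    (A B : Matrix (Fin n) (Fin n) ℂ)
    (hA : ∀ i j, A i j ≠ 0 → (bk i = a ∧ bk j = b) ∨ (bk i = b ∧ bk j = a))
    (hB : ∀ i j, B i j ≠ 0 → (bk i = a ∧ bk j = b) ∨ (bk i = b ∧ bk j = a))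
    (i j : Fin n) (h : ¬((bk i = a ∧ bk j = a) ∨ (bk i = b ∧ bk j = b))) :
    (A * B) i j = 0 := by
  rw [Matrix.mul_apply]
  refine Finset.sum_eq_zero fun l _ => ?_
  by_cases h1 : A i l = 0
  · simp [h1]
  by_cases h2 : B l j = 0
  · simp [h2]
  exfalso
  rcases hA i l h1 with ⟨e1, e2⟩ | ⟨e1, e2⟩ <;> rcases hB l j h2 with ⟨e3, e4⟩ | ⟨e3, e4⟩ <;>
    simp_all

private def blockRes {n : ℕ} (bk : Fin n → Fin 3) (d : Fin 3)
    (A : Matrix (Fin n) (Fin n) ℂ) : Matrix (Fin n) (Fin n) ℂ :=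
  Matrix.of fun i j => if bk i = d ∧ bk j = d then A i j else 0

private lemma blockRes_split {n : ℕ} (bk : Fin n → Fin 3) (a b : Fin 3) (hab : a ≠ b)
    (A : Matrix (Fin n) (Fin n) ℂ)
    (hA : ∀ i j, ¬((bk i = a ∧ bk j = a) ∨ (bk i = b ∧ bk j = b)) → A i j = 0) :
    blockRes bk a A + blockRes bk b A = A := by
  ext i j
  simp only [Matrix.add_apply, blockRes, Matrix.of_apply]
  by_cases h1 : bk i = a ∧ bk j = a
  · simp [h1, hab]
  · by_cases h2 : bk i = b ∧ bk j = b
    · simp [h1, h2, Ne.symm hab]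
    · simp [h1, h2, hA i j (by tauto)]

private lemma blockRes_skew {n : ℕ} (bk : Fin n → Fin 3) (d : Fin 3)
    (X : Matrix (Fin n) (Fin n) ℂ) (h : Xᴴ = -X) :
    (blockRes bk d X)ᴴ = -(blockRes bk d X) := by
  ext i j
  have hh := congrFun (congrFun h i) j
  simp only [Matrix.conjTranspose_apply, Matrix.neg_apply, blockRes, Matrix.of_apply] at hh ⊢
  by_cases h1 : bk i = d <;> by_cases h2 : bk j = d <;> simp [h1, h2, hh]

private lemma blockRes_symm {n : ℕ} (bk : Fin n → Fin 3) (d : Fin 3)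
    (Y : Matrix (Fin n) (Fin n) ℂ) (h : Yᵀ = Y) :
    (blockRes bk d Y)ᵀ = blockRes bk d Y := by
  ext i j
  have hh := congrFun (congrFun h i) j
  simp only [Matrix.transpose_apply, blockRes, Matrix.of_apply] at hh ⊢
  by_cases h1 : bk i = d <;> by_cases h2 : bk j = d <;> simp [h1, h2, hh, and_comm]

private lemma blockRes_supp {n : ℕ} (bk : Fin n → Fin 3) (d : Fin 3)
    (A : Matrix (Fin n) (Fin n) ℂ) (i j : Fin n) (h : blockRes bk d A i j ≠ 0) :
    bk i = d ∧ bk j = d := by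
  by_contra hc
  exact h (by simp [blockRes, hc])

/-- **Lemma 3.1 (part).**  For distinct `a, b ∈ {1,2,3}`, the commutator of any two elements
of `p_{ab}` lies in the direct sum `p_a ⊕ p_b`: `[p_{ab}, p_{ab}] ⊆ p_a ⊕ p_b`. -/
theorem bracket_pOff_self_subset (k : Fin 3 → ℕ) (hk : ∀ a, 1 ≤ k a)
    (a b : Fin 3) (hab : a ≠ b)
    (Z W : Matrix (Fin (blockTotal k) ⊕ Fin (blockTotal k))
      (Fin (blockTotal k) ⊕ Fin (blockTotal k)) ℂ)
    (hZ : Z ∈ pOff k a b) (hW : W ∈ pOff k a b) :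
    ∃ U ∈ pDiag k a, ∃ V ∈ pDiag k b, Z * W - W * Z = U + V := by
  obtain ⟨X₁, Y₁, hX₁s, hY₁s, hX₁b, hY₁b, rfl⟩ := hZ
  obtain ⟨X₂, Y₂, hX₂s, hY₂s, hX₂b, hY₂b, rfl⟩ := hW
  simp only [Set.mem_insert_iff, Set.mem_singleton_iff, Prod.mk.injEq] at hX₁b hY₁b hX₂b hY₂b
  set bk := blockOf k with hbk
  obtain ⟨X', hX'⟩ : ∃ M : Matrix (Fin (blockTotal k)) (Fin (blockTotal k)) ℂ,
      M = X₁ * X₂ - (Y₁.map (starRingEnd ℂ)) * Y₂ -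
        (X₂ * X₁ - (Y₂.map (starRingEnd ℂ)) * Y₁) := ⟨_, rfl⟩
  obtain ⟨Y', hY'⟩ : ∃ M : Matrix (Fin (blockTotal k)) (Fin (blockTotal k)) ℂ,
      M = Y₁ * X₂ + (X₁.map (starRingEnd ℂ)) * Y₂ -
        (Y₂ * X₁ + (X₂.map (starRingEnd ℂ)) * Y₁) := ⟨_, rfl⟩
  -- supports of conjugated matrices
  have hmY₁ : ∀ i j, (Y₁.map (starRingEnd ℂ)) i j ≠ 0 →
      (bk i = a ∧ bk j = b) ∨ (bk i = b ∧ bk j = a) :=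
    fun i j h => hY₁b i j fun h0 => h (by simp [Matrix.map_apply, h0])
  have hmY₂ : ∀ i j, (Y₂.map (starRingEnd ℂ)) i j ≠ 0 →
      (bk i = a ∧ bk j = b) ∨ (bk i = b ∧ bk j = a) :=
    fun i j h => hY₂b i j fun h0 => h (by simp [Matrix.map_apply, h0])
  have hmX₁ : ∀ i j, (X₁.map (starRingEnd ℂ)) i j ≠ 0 →
      (bk i = a ∧ bk j = b) ∨ (bk i = b ∧ bk j = a) :=
    fun i j h => hX₁b i j fun h0 => h (by simp [Matrix.map_apply, h0])
  have hmX₂ : ∀ i j, (X₂.map (starRingEnd ℂ)) i j ≠ 0 →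
      (bk i = a ∧ bk j = b) ∨ (bk i = b ∧ bk j = a) :=
    fun i j h => hX₂b i j fun h0 => h (by simp [Matrix.map_apply, h0])
  -- support of X', Y'
  have hX'supp : ∀ i j, ¬((bk i = a ∧ bk j = a) ∨ (bk i = b ∧ bk j = b)) → X' i j = 0 := by
    intro i j h
    simp only [hX', Matrix.sub_apply]
    rw [supp_mul bk a b hab _ _ hX₁b hX₂b i j h, supp_mul bk a b hab _ _ hmY₁ hY₂b i j h,
        supp_mul bk a b hab _ _ hX₂b hX₁b i j h, supp_mul bk a b hab _ _ hmY₂ hY₁b i j h]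
    ring
  have hY'supp : ∀ i j, ¬((bk i = a ∧ bk j = a) ∨ (bk i = b ∧ bk j = b)) → Y' i j = 0 := by
    intro i j h
    simp only [hY', Matrix.sub_apply, Matrix.add_apply]
    rw [supp_mul bk a b hab _ _ hY₁b hX₂b i j h, supp_mul bk a b hab _ _ hmX₁ hY₂b i j h,
        supp_mul bk a b hab _ _ hY₂b hX₁b i j h, supp_mul bk a b hab _ _ hmX₂ hY₁b i j h]
    ring
  -- symmetry facts
  have hsym₁ : ∀ i j, Y₁ i j = Y₁ j i := fun i j => congrFun (congrFun hY₁s j) i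
  have hsym₂ : ∀ i j, Y₂ i j = Y₂ j i := fun i j => congrFun (congrFun hY₂s j) i
  have hY₁H : Y₁ᴴ = Y₁.map (starRingEnd ℂ) := by
    ext i j
    simp only [Matrix.conjTranspose_apply, Matrix.map_apply, starRingEnd_apply]
    rw [hsym₁ j i]
  have hY₂H : Y₂ᴴ = Y₂.map (starRingEnd ℂ) := by
    ext i j
    simp only [Matrix.conjTranspose_apply, Matrix.map_apply, starRingEnd_apply]
    rw [hsym₂ j i]
  have hmY₁H : (Y₁.map (starRingEnd ℂ))ᴴ = Y₁ := by
    ext i j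
    simp only [Matrix.conjTranspose_apply, Matrix.map_apply, starRingEnd_apply, star_star]
    exact (hsym₁ i j).symm
  have hmY₂H : (Y₂.map (starRingEnd ℂ))ᴴ = Y₂ := by
    ext i j
    simp only [Matrix.conjTranspose_apply, Matrix.map_apply, starRingEnd_apply, star_star]
    exact (hsym₂ i j).symm
  have hX₁T : X₁ᵀ = -(X₁.map (starRingEnd ℂ)) := by
    ext i j
    have e := congrFun (congrFun hX₁s j) i
    simp only [Matrix.conjTranspose_apply, Matrix.neg_apply] at e
    simp only [Matrix.transpose_apply, Matrix.neg_apply, Matrix.map_apply, starRingEnd_apply]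
    linear_combination e
  have hX₂T : X₂ᵀ = -(X₂.map (starRingEnd ℂ)) := by
    ext i j
    have e := congrFun (congrFun hX₂s j) i
    simp only [Matrix.conjTranspose_apply, Matrix.neg_apply] at e
    simp only [Matrix.transpose_apply, Matrix.neg_apply, Matrix.map_apply, starRingEnd_apply]
    linear_combination e
  -- skew-hermitian / symmetric property of X', Y'
  have hX's : X'ᴴ = -X' := by
    simp only [hX', Matrix.conjTranspose_sub, Matrix.conjTranspose_mul,
      hX₁s, hX₂s, hY₁H, hY₂H, hmY₁H, hmY₂H]
    noncomm_ring
  have hY's : Y'ᵀ = Y' := by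
    have hmX₁T : (X₁.map (starRingEnd ℂ))ᵀ = -X₁ := by
      rw [← Matrix.transpose_map, hX₁T]
      ext i j; simp
    have hmX₂T : (X₂.map (starRingEnd ℂ))ᵀ = -X₂ := by
      rw [← Matrix.transpose_map, hX₂T]
      ext i j; simp
    simp only [hY', Matrix.transpose_sub, Matrix.transpose_add, Matrix.transpose_mul,
      hY₁s, hY₂s, hX₁T, hX₂T, hmX₁T, hmX₂T]
    noncomm_ring
  -- the decomposition
  refine ⟨_, ⟨blockRes bk a X', blockRes bk a Y', blockRes_skew bk a X' hX's,
      blockRes_symm bk a Y' hY's, ?_, ?_, rfl⟩,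
    _, ⟨blockRes bk b X', blockRes bk b Y', blockRes_skew bk b X' hX's,
      blockRes_symm bk b Y' hY's, ?_, ?_, rfl⟩, ?_⟩
  · intro i j h
    obtain ⟨h1, h2⟩ := blockRes_supp bk a X' i j h
    simp [h1, h2, ← hbk]
  · intro i j h
    obtain ⟨h1, h2⟩ := blockRes_supp bk a Y' i j h
    simp [h1, h2, ← hbk]
  · intro i j h
    obtain ⟨h1, h2⟩ := blockRes_supp bk b X' i j h
    simp [h1, h2, ← hbk]
  · intro i j h
    obtain ⟨h1, h2⟩ := blockRes_supp bk b Y' i j h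
    simp [h1, h2, ← hbk]
  -- the commutator identity
  have hXsplit := blockRes_split bk a b hab X' hX'supp
  have hYsplit := blockRes_split bk a b hab Y' hY'supp
  have key : Matrix.fromBlocks X₁ (-(Y₁.map (starRingEnd ℂ))) Y₁ (X₁.map (starRingEnd ℂ)) *
        Matrix.fromBlocks X₂ (-(Y₂.map (starRingEnd ℂ))) Y₂ (X₂.map (starRingEnd ℂ)) -
      Matrix.fromBlocks X₂ (-(Y₂.map (starRingEnd ℂ))) Y₂ (X₂.map (starRingEnd ℂ)) *
        Matrix.fromBlocks X₁ (-(Y₁.map (starRingEnd ℂ))) Y₁ (X₁.map (starRingEnd ℂ)) =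
      Matrix.fromBlocks X' (-(Y'.map (starRingEnd ℂ))) Y' (X'.map (starRingEnd ℂ)) := by
    rw [Matrix.fromBlocks_multiply, Matrix.fromBlocks_multiply, sub_eq_add_neg,
      Matrix.fromBlocks_neg, Matrix.fromBlocks_add, Matrix.fromBlocks_inj]
    refine ⟨?_, ?_, ?_, ?_⟩
    · rw [hX']; noncomm_ring
    · rw [hY', mapConj_sub, mapConj_add, mapConj_add, Matrix.map_mul, Matrix.map_mul,
        Matrix.map_mul, Matrix.map_mul, mapConj_mapConj, mapConj_mapConj]
      noncomm_ring
    · rw [hY']; noncomm_ring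
    · rw [hX', mapConj_sub, mapConj_sub, mapConj_sub, Matrix.map_mul, Matrix.map_mul,
        Matrix.map_mul, Matrix.map_mul, mapConj_mapConj, mapConj_mapConj]
      noncomm_ring
  rw [key, Matrix.fromBlocks_add, Matrix.fromBlocks_inj]
  refine ⟨hXsplit.symm, ?_, hYsplit.symm, ?_⟩
  · rw [← neg_add, ← mapConj_add, hYsplit]
  · rw [← mapConj_add, hXsplit]
end

section
/- With the notation below, the following bracket relations hold: (i) for any a ∈ {1,2,3}, [p_a, p_a] ⊆ p_a (each p_a is a Lie subalgebra); (ii) for any distinct a, b ∈ {1,2,3}, [p_a, p_{ab}] ⊆ p_{ab}; (iii) for pairwise distinct a, b, c ∈ {1,2,3}, [p_a, p_{bc}] = 0, i.e., every element of p_a commutes with every element of p_{bc}. -/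
open Matrix

section Aux

variable {n : Type*} [Fintype n] [DecidableEq n]

/-- If a product entry is nonzero, some intermediate index links nonzero entries. -/
lemma aux_mul_ne_zero_exists (A B : Matrix n n ℂ) (i j : n)
    (h : (A * B) i j ≠ 0) : ∃ l, A i l ≠ 0 ∧ B l j ≠ 0 := by
  by_contra hc
  push_neg at hc
  apply h
  rw [Matrix.mul_apply]
  apply Finset.sum_eq_zero
  intro l _
  rcases em (A i l = 0) with h0 | h0
  · simp [h0]
  · simp [hc l h0]

lemma aux_mul_eq_zero (A B : Matrix n n ℂ) (P Q : n → n → Prop)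
    (hA : ∀ i j, A i j ≠ 0 → P i j) (hB : ∀ i j, B i j ≠ 0 → Q i j)
    (h : ∀ i l j, P i l → Q l j → False) : A * B = 0 := by
  ext i j
  by_contra hne
  obtain ⟨l, hl1, hl2⟩ := aux_mul_ne_zero_exists A B i j hne
  exact h i l j (hA _ _ hl1) (hB _ _ hl2)

lemma aux_map_ne_zero (A : Matrix n n ℂ) (i j : n)
    (h : (A.map (starRingEnd ℂ)) i j ≠ 0) : A i j ≠ 0 := by
  intro h0
  exact h (by simp [Matrix.map_apply, h0])

lemma aux_map_map (A : Matrix n n ℂ) :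
    (A.map (starRingEnd ℂ)).map (starRingEnd ℂ) = A := by
  ext i j; simp [Matrix.map_apply]

lemma aux_conjT_map (A : Matrix n n ℂ) :
    (A.map (starRingEnd ℂ))ᴴ = Aᵀ := by
  ext i j; simp [Matrix.conjTranspose_apply, Matrix.map_apply, Matrix.transpose_apply]

end Aux

/-- General bracket lemma: the bracket of elements supported on block sets `S₁` and `S₂`
is supported on any `S₃` containing both compositions. -/
lemma bracket_spBlockSet (k : Fin 3 → ℕ) (S₁ S₂ S₃ : Set (Fin 3 × Fin 3))
    (h12 : ∀ p q r, (p, q) ∈ S₁ → (q, r) ∈ S₂ → (p, r) ∈ S₃)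
    (h21 : ∀ p q r, (p, q) ∈ S₂ → (q, r) ∈ S₁ → (p, r) ∈ S₃)
    {Z W : Matrix (Fin (blockTotal k) ⊕ Fin (blockTotal k))
      (Fin (blockTotal k) ⊕ Fin (blockTotal k)) ℂ}
    (hZ : Z ∈ spBlockSet k S₁) (hW : W ∈ spBlockSet k S₂) :
    Z * W - W * Z ∈ spBlockSet k S₃ := by
  obtain ⟨X₁, Y₁, hX1, hY1, hXs1, hYs1, rfl⟩ := hZ
  obtain ⟨X₂, Y₂, hX2, hY2, hXs2, hYs2, rfl⟩ := hW
  have hCT : ∀ A : Matrix (Fin (blockTotal k)) (Fin (blockTotal k)) ℂ,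
      Aᴴ = Aᵀ.map (starRingEnd ℂ) := fun A => by
    ext i j; simp [Matrix.conjTranspose_apply, Matrix.map_apply, Matrix.transpose_apply]
  refine ⟨X₁ * X₂ - (Y₁.map (starRingEnd ℂ)) * Y₂ -
      (X₂ * X₁ - (Y₂.map (starRingEnd ℂ)) * Y₁),
    Y₁ * X₂ + (X₁.map (starRingEnd ℂ)) * Y₂ -
      (Y₂ * X₁ + (X₂.map (starRingEnd ℂ)) * Y₁), ?_, ?_, ?_, ?_, ?_⟩
  · -- skew-hermitian
    have e1 : Y₁ᴴ = Y₁.map (starRingEnd ℂ) := by rw [hCT, hY1]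
    have e2 : Y₂ᴴ = Y₂.map (starRingEnd ℂ) := by rw [hCT, hY2]
    have f1 : (Y₁.map (starRingEnd ℂ))ᴴ = Y₁ := by rw [aux_conjT_map, hY1]
    have f2 : (Y₂.map (starRingEnd ℂ))ᴴ = Y₂ := by rw [aux_conjT_map, hY2]
    simp only [conjTranspose_sub, conjTranspose_mul, hX1, hX2, e1, e2, f1, f2,
      neg_mul, mul_neg, neg_neg]
    abel
  · -- symmetric
    have t1 : X₁ᵀ = -(X₁.map (starRingEnd ℂ)) := by
      have h := congrArg (fun M => Matrix.map M (starRingEnd ℂ)) hX1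
      simp only [hCT, aux_map_map] at h
      rw [h]; ext i j; simp [Matrix.map_apply]
    have t2 : X₂ᵀ = -(X₂.map (starRingEnd ℂ)) := by
      have h := congrArg (fun M => Matrix.map M (starRingEnd ℂ)) hX2
      simp only [hCT, aux_map_map] at h
      rw [h]; ext i j; simp [Matrix.map_apply]
    have m1 : (X₁.map (starRingEnd ℂ))ᵀ = -X₁ := by
      rw [← Matrix.transpose_map, t1]; ext i j; simp [Matrix.map_apply]
    have m2 : (X₂.map (starRingEnd ℂ))ᵀ = -X₂ := by
      rw [← Matrix.transpose_map, t2]; ext i j; simp [Matrix.map_apply]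
    simp only [transpose_sub, transpose_add, transpose_mul, t1, t2, m1, m2, hY1, hY2,
      neg_mul, mul_neg]
    abel
  · -- support of X part
    intro i j h
    have h4 : (X₁ * X₂) i j ≠ 0 ∨ ((Y₁.map (starRingEnd ℂ)) * Y₂) i j ≠ 0 ∨
        (X₂ * X₁) i j ≠ 0 ∨ ((Y₂.map (starRingEnd ℂ)) * Y₁) i j ≠ 0 := by
      by_contra hc
      push_neg at hc
      obtain ⟨a1, a2, a3, a4⟩ := hc
      exact h (by simp [Matrix.sub_apply, a1, a2, a3, a4])
    rcases h4 with h' | h' | h' | h' <;>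
      obtain ⟨l, hl1, hl2⟩ := aux_mul_ne_zero_exists _ _ _ _ h'
    · exact h12 _ _ _ (hXs1 _ _ hl1) (hXs2 _ _ hl2)
    · exact h12 _ _ _ (hYs1 _ _ (aux_map_ne_zero _ _ _ hl1)) (hYs2 _ _ hl2)
    · exact h21 _ _ _ (hXs2 _ _ hl1) (hXs1 _ _ hl2)
    · exact h21 _ _ _ (hYs2 _ _ (aux_map_ne_zero _ _ _ hl1)) (hYs1 _ _ hl2)
  · -- support of Y part
    intro i j h
    have h4 : (Y₁ * X₂) i j ≠ 0 ∨ ((X₁.map (starRingEnd ℂ)) * Y₂) i j ≠ 0 ∨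
        (Y₂ * X₁) i j ≠ 0 ∨ ((X₂.map (starRingEnd ℂ)) * Y₁) i j ≠ 0 := by
      by_contra hc
      push_neg at hc
      obtain ⟨a1, a2, a3, a4⟩ := hc
      exact h (by simp [Matrix.sub_apply, Matrix.add_apply, a1, a2, a3, a4])
    rcases h4 with h' | h' | h' | h' <;>
      obtain ⟨l, hl1, hl2⟩ := aux_mul_ne_zero_exists _ _ _ _ h'
    · exact h12 _ _ _ (hYs1 _ _ hl1) (hXs2 _ _ hl2)
    · exact h12 _ _ _ (hXs1 _ _ (aux_map_ne_zero _ _ _ hl1)) (hYs2 _ _ hl2)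
    · exact h21 _ _ _ (hYs2 _ _ hl1) (hXs1 _ _ hl2)
    · exact h21 _ _ _ (hXs2 _ _ (aux_map_ne_zero _ _ _ hl1)) (hYs1 _ _ hl2)
  · -- block identity
    rw [Matrix.fromBlocks_multiply, Matrix.fromBlocks_multiply, sub_eq_add_neg,
      Matrix.fromBlocks_neg, Matrix.fromBlocks_add]
    have hmul : ∀ A B : Matrix (Fin (blockTotal k)) (Fin (blockTotal k)) ℂ,
        (A * B).map (starRingEnd ℂ) = A.map (starRingEnd ℂ) * B.map (starRingEnd ℂ) :=
      fun A B => Matrix.map_mul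
    have hsub : ∀ A B : Matrix (Fin (blockTotal k)) (Fin (blockTotal k)) ℂ,
        (A - B).map (starRingEnd ℂ) = A.map (starRingEnd ℂ) - B.map (starRingEnd ℂ) :=
      fun A B => Matrix.map_sub (starRingEnd ℂ) (by simp) A B
    have hadd : ∀ A B : Matrix (Fin (blockTotal k)) (Fin (blockTotal k)) ℂ,
        (A + B).map (starRingEnd ℂ) = A.map (starRingEnd ℂ) + B.map (starRingEnd ℂ) :=
      fun A B => Matrix.map_add (starRingEnd ℂ) (by simp) A B
    have hneg : ∀ A : Matrix (Fin (blockTotal k)) (Fin (blockTotal k)) ℂ,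
        (-A).map (starRingEnd ℂ) = -(A.map (starRingEnd ℂ)) := fun A => by
      ext i j; simp [Matrix.map_apply]
    rw [Matrix.fromBlocks_inj]
    refine ⟨?_, ?_, ?_, ?_⟩ <;>
      · try simp only [hsub, hadd, hmul, hneg, aux_map_map, neg_mul, mul_neg, neg_neg]
        abel

/-- If the two block supports are never composable, the product vanishes. -/
lemma mul_spBlockSet_eq_zero (k : Fin 3 → ℕ) (S₁ S₂ : Set (Fin 3 × Fin 3))
    (h : ∀ p q r, (p, q) ∈ S₁ → (q, r) ∈ S₂ → False)
    {Z W : Matrix (Fin (blockTotal k) ⊕ Fin (blockTotal k))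
      (Fin (blockTotal k) ⊕ Fin (blockTotal k)) ℂ}
    (hZ : Z ∈ spBlockSet k S₁) (hW : W ∈ spBlockSet k S₂) : Z * W = 0 := by
  obtain ⟨X₁, Y₁, hX1, hY1, hXs1, hYs1, rfl⟩ := hZ
  obtain ⟨X₂, Y₂, hX2, hY2, hXs2, hYs2, rfl⟩ := hW
  set c := starRingEnd ℂ
  have key : ∀ (A B : Matrix (Fin (blockTotal k)) (Fin (blockTotal k)) ℂ),
      (∀ i j, A i j ≠ 0 → (blockOf k i, blockOf k j) ∈ S₁) →
      (∀ i j, B i j ≠ 0 → (blockOf k i, blockOf k j) ∈ S₂) → A * B = 0 := by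
    intro A B hA hB
    exact aux_mul_eq_zero A B _ _ hA hB (fun i l j h1 h2 => h _ _ _ h1 h2)
  have hX1m : ∀ i j, (X₁.map c) i j ≠ 0 → (blockOf k i, blockOf k j) ∈ S₁ :=
    fun i j hij => hXs1 i j (aux_map_ne_zero _ _ _ hij)
  have hY1m : ∀ i j, (Y₁.map c) i j ≠ 0 → (blockOf k i, blockOf k j) ∈ S₁ :=
    fun i j hij => hYs1 i j (aux_map_ne_zero _ _ _ hij)
  have hX2m : ∀ i j, (X₂.map c) i j ≠ 0 → (blockOf k i, blockOf k j) ∈ S₂ :=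
    fun i j hij => hXs2 i j (aux_map_ne_zero _ _ _ hij)
  have hY2m : ∀ i j, (Y₂.map c) i j ≠ 0 → (blockOf k i, blockOf k j) ∈ S₂ :=
    fun i j hij => hYs2 i j (aux_map_ne_zero _ _ _ hij)
  rw [Matrix.fromBlocks_multiply]
  have z1 := key _ _ hXs1 hXs2
  have z2 := key _ _ hY1m hYs2
  have z3 := key _ _ hXs1 hY2m
  have z4 := key _ _ hY1m hX2m
  have z5 := key _ _ hYs1 hXs2
  have z6 := key _ _ hX1m hYs2
  have z7 := key _ _ hYs1 hY2m
  have z8 := key _ _ hX1m hX2m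
  simp only [mul_neg, neg_mul, z1, z2, z3, z4, z5, z6, z7, z8, neg_zero, add_zero,
    zero_add, Matrix.fromBlocks_zero]

/-- **Lemma 3.1 (part).**  (i) For any `a`, `[p_a, p_a] ⊆ p_a` (each `p_a` is a Lie
subalgebra); (ii) for distinct `a, b`, `[p_a, p_{ab}] ⊆ p_{ab}`; (iii) for pairwise distinct
`a, b, c`, `[p_a, p_{bc}] = 0`, i.e. every element of `p_a` commutes with every element of
`p_{bc}`. -/
theorem bracket_pDiag_relations (k : Fin 3 → ℕ) (hk : ∀ a, 1 ≤ k a) :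
    (∀ a : Fin 3,
      ∀ Z ∈ pDiag k a, ∀ W ∈ pDiag k a, Z * W - W * Z ∈ pDiag k a) ∧
    (∀ a b : Fin 3, a ≠ b →
      ∀ Z ∈ pDiag k a, ∀ W ∈ pOff k a b, Z * W - W * Z ∈ pOff k a b) ∧
    (∀ a b c : Fin 3, a ≠ b → b ≠ c → a ≠ c →
      ∀ Z ∈ pDiag k a, ∀ W ∈ pOff k b c, Z * W = W * Z) := by
  refine ⟨?_, ?_, ?_⟩
  · intro a Z hZ W hW
    refine bracket_spBlockSet k _ _ _ ?_ ?_ hZ hW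
    · rintro p q r h1 h2
      simp only [Set.mem_singleton_iff, Prod.mk.injEq] at *
      exact ⟨h1.1, h2.2⟩
    · rintro p q r h1 h2
      simp only [Set.mem_singleton_iff, Prod.mk.injEq] at *
      exact ⟨h1.1, h2.2⟩
  · intro a b hab Z hZ W hW
    refine bracket_spBlockSet k _ _ _ ?_ ?_ hZ hW
    · rintro p q r h1 h2
      simp only [Set.mem_singleton_iff, Set.mem_insert_iff, Prod.mk.injEq] at *
      rcases h2 with ⟨h2a, h2b⟩ | ⟨h2a, h2b⟩
      · exact Or.inl ⟨h1.1, h2b⟩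
      · exact absurd (h1.2.symm.trans h2a) hab
    · rintro p q r h1 h2
      simp only [Set.mem_singleton_iff, Set.mem_insert_iff, Prod.mk.injEq] at *
      rcases h1 with ⟨h1a, h1b⟩ | ⟨h1a, h1b⟩
      · exact absurd (h2.1.symm.trans h1b) hab
      · exact Or.inr ⟨h1a, h2.2⟩
  · intro a b c hab hbc hac Z hZ W hW
    have h1 : Z * W = 0 := by
      refine mul_spBlockSet_eq_zero k _ _ ?_ hZ hW
      rintro p q r hpq hqr
      simp only [Set.mem_singleton_iff, Set.mem_insert_iff, Prod.mk.injEq] at *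
      rcases hqr with ⟨h, _⟩ | ⟨h, _⟩
      · exact hab (hpq.2.symm.trans h)
      · exact hac (hpq.2.symm.trans h)
    have h2 : W * Z = 0 := by
      refine mul_spBlockSet_eq_zero k _ _ ?_ hW hZ
      rintro p q r hpq hqr
      simp only [Set.mem_singleton_iff, Set.mem_insert_iff, Prod.mk.injEq] at *
      rcases hpq with ⟨_, h⟩ | ⟨_, h⟩
      · exact hac (h.symm.trans hqr.1).symm
      · exact hab (h.symm.trans hqr.1).symm
    rw [h1, h2]
end

section
/- With the notation below, the following bracket relations hold: (i) [n3, n3] ⊆ h; (ii) [n2, n3] ⊆ n2; (iii) [n2, n2] ⊆ h ⊕ sp(q) ⊕ n3, where sp(q) denotes the subspace of those Z whose X and Y have only their (2,2) blocks nonzero. -/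
open Matrix

/-- The block (`0` or `1`) to which the index `i ∈ Fin (p + q)` belongs, for row/column
blocks of sizes `p, q`. -/
def blockOf2 (p q : ℕ) (i : Fin (p + q)) : Fin 2 :=
  if (i : ℕ) < p then 0 else 1

/-- The subspace of the compact symplectic Lie algebra `sp(n)`, `n = p + q` (realized as
`2n × 2n` complex matrices `Z = [[X, −conj Y], [Y, conj X]]` with `X` skew-Hermitian and `Y`
complex symmetric) consisting of those `Z` for which the only possibly nonzero `2 × 2`-blocks
of `X` are the blocks in `SX` and of `Y` are the blocks in `SY` (for row/column block sizes
`p, q`). -/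
def spBlockSet2 (p q : ℕ) (SX SY : Set (Fin 2 × Fin 2)) :
    Set (Matrix (Fin (p + q) ⊕ Fin (p + q)) (Fin (p + q) ⊕ Fin (p + q)) ℂ) :=
  { Z | ∃ X Y : Matrix (Fin (p + q)) (Fin (p + q)) ℂ,
      Xᴴ = -X ∧ Yᵀ = Y ∧
      (∀ i j, X i j ≠ 0 → (blockOf2 p q i, blockOf2 p q j) ∈ SX) ∧
      (∀ i j, Y i j ≠ 0 → (blockOf2 p q i, blockOf2 p q j) ∈ SY) ∧
      Z = Matrix.fromBlocks X (-(Y.map (starRingEnd ℂ))) Y (X.map (starRingEnd ℂ)) }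

/-- The subalgebra `h ≅ u(p)`: `Y = 0` and `X` has only its `(1,1)` block nonzero. -/
def hSub (p q : ℕ) := spBlockSet2 p q {(0, 0)} ∅

/-- The subspace `n₂`: `X` and `Y` have only their `(1,2)` and `(2,1)` blocks nonzero. -/
def n2Sub (p q : ℕ) := spBlockSet2 p q {(0, 1), (1, 0)} {(0, 1), (1, 0)}

/-- The subspace `n₃`: `X = 0` and `Y` has only its `(1,1)` block nonzero (a `p × p`
complex symmetric matrix). -/
def n3Sub (p q : ℕ) := spBlockSet2 p q ∅ {(0, 0)}

/-- The subalgebra `sp(q)`: `X` and `Y` have only their `(2,2)` blocks nonzero. -/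
def spqSub (p q : ℕ) := spBlockSet2 p q {(1, 1)} {(1, 1)}

/-!
Write `Z(X, Y)` for the matrix `[[X, -conj Y], [Y, conj X]]`. The commutator of `Z(X₁, Y₁)` and
`Z(X₂, Y₂)` is `Z(X', Y')` with `X' = X₁X₂ - X₂X₁ - conj Y₁ Y₂ + conj Y₂ Y₁` and
`Y' = Y₁X₂ - Y₂X₁ + conj X₁ Y₂ - conj X₂ Y₁`. If the nonzero blocks of `A` lie in a set `S` of
block positions and those of `B` in `T`, then the nonzero blocks of `AB` lie in the relational
composite `S ○ T`; so the block pattern of `[Z, W]` is a finite computation on `Fin 2 × Fin 2`,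
which yields (i) and (ii) directly and puts `[n₂, n₂]` in the block-diagonal part for (iii).
That part splits as `h ⊕ sp(q) ⊕ n₃` by cutting `X` and `Y` into their diagonal blocks: masking by
a symmetric set of block positions preserves skew-Hermitian and symmetric matrices.
-/

open SetRel ComplexConjugate

section BlockSupport

variable {n ι R : Type*} {b : n → ι} {S T : SetRel ι ι}

def BlockSupported [Zero R] (b : n → ι) (S : SetRel ι ι) (M : Matrix n n R) : Prop :=
  ∀ i j, M i j ≠ 0 → (b i, b j) ∈ S

namespace BlockSupported

theorem mono [Zero R] {M : Matrix n n R} (hM : BlockSupported b S M) (h : S ⊆ T) :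
    BlockSupported b T M :=
  fun i j hij => h (hM i j hij)

theorem add [AddZeroClass R] {A B : Matrix n n R} (hA : BlockSupported b S A)
    (hB : BlockSupported b S B) : BlockSupported b S (A + B) := by
  intro i j hij
  by_cases hAij : A i j = 0
  · exact hB i j (by simpa [hAij] using hij)
  · exact hA i j hAij

theorem neg [SubtractionMonoid R] {A : Matrix n n R} (hA : BlockSupported b S A) :
    BlockSupported b S (-A) :=
  fun i j hij => hA i j (by simpa using hij)

theorem sub [AddGroup R] {A B : Matrix n n R} (hA : BlockSupported b S A)
    (hB : BlockSupported b S B) : BlockSupported b S (A - B) := by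
  rw [sub_eq_add_neg]
  exact hA.add hB.neg

theorem map {R' : Type*} [Zero R] [Zero R'] {M : Matrix n n R} (hM : BlockSupported b S M)
    {f : R → R'} (hf : f 0 = 0) : BlockSupported b S (M.map f) :=
  fun i j hij => hM i j fun h => hij (by simp [h, hf])

theorem mul [Fintype n] [NonUnitalNonAssocSemiring R] {A B : Matrix n n R}
    (hA : BlockSupported b S A) (hB : BlockSupported b T B) :
    BlockSupported b (S ○ T) (A * B) := by
  intro i j hij
  rw [Matrix.mul_apply] at hij
  obtain ⟨k, -, hk⟩ := Finset.exists_ne_zero_of_sum_ne_zero hij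
  exact ⟨b k, hA i k (left_ne_zero_of_mul hk), hB k j (right_ne_zero_of_mul hk)⟩

end BlockSupported

open scoped Classical in
noncomputable def blockMask [Zero R] (b : n → ι) (S : SetRel ι ι) (M : Matrix n n R) :
    Matrix n n R :=
  Matrix.of fun i j => if (b i, b j) ∈ S then M i j else 0

section BlockMask

variable {M : Matrix n n R}

theorem blockMask_union [AddZeroClass R] (h : Disjoint S T) :
    blockMask b (S ∪ T) M = blockMask b S M + blockMask b T M := by
  ext i j
  simp only [blockMask, Matrix.add_apply, Matrix.of_apply]
  split_ifs with hST hS hT hT <;> simp_all [Set.disjoint_left.mp h]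

theorem blockMask_eq_self [Zero R] (hM : BlockSupported b S M) (h : S ⊆ T) :
    blockMask b T M = M := by
  ext i j
  by_cases hij : M i j = 0
  · simp [blockMask, hij]
  · simp [blockMask, h (hM i j hij)]

theorem BlockSupported.blockMask [Zero R] (hM : BlockSupported b S M) (T : SetRel ι ι) :
    BlockSupported b (S ∩ T) (blockMask b T M) := by
  intro i j hij
  by_cases hT : (b i, b j) ∈ T
  · simp only [_root_.blockMask, hT, if_true, Matrix.of_apply] at hij
    exact ⟨hM i j hij, hT⟩
  · simp [_root_.blockMask, hT] at hij

theorem blockMask_neg [NegZeroClass R] : blockMask b S (-M) = -blockMask b S M := by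
  ext i j; by_cases h : (b i, b j) ∈ S <;> simp [blockMask, h]

theorem transpose_blockMask [Zero R] [S.IsSymm] : (blockMask b S M)ᵀ = blockMask b S Mᵀ := by
  ext i j
  simp only [blockMask, Matrix.transpose_apply, Matrix.of_apply]
  classical exact if_congr (SetRel.comm S) rfl rfl

theorem conjTranspose_blockMask [AddMonoid R] [StarAddMonoid R] [S.IsSymm] :
    (blockMask b S M)ᴴ = blockMask b S Mᴴ := by
  ext i j
  simp only [blockMask, Matrix.conjTranspose_apply, Matrix.of_apply,
    apply_ite star, star_zero]
  classical exact if_congr (SetRel.comm S) rfl rfl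

end BlockMask

instance SetRel.isSymm_singleton_diag (a : ι) : SetRel.IsSymm ({(a, a)} : SetRel ι ι) where
  symm _ _ h := by simp_all

end BlockSupport

section SpMatrix

variable {n R : Type*} [CommRing R] [StarRing R]

abbrev spMatrix (X Y : Matrix n n R) : Matrix (n ⊕ n) (n ⊕ n) R :=
  fromBlocks X (-(Y.map conj)) Y (X.map conj)

theorem spMatrix_add (X₁ Y₁ X₂ Y₂ : Matrix n n R) :
    spMatrix (X₁ + X₂) (Y₁ + Y₂) = spMatrix X₁ Y₁ + spMatrix X₂ Y₂ := by
  simp only [spMatrix, fromBlocks_add, Matrix.map_add _ (map_add conj), neg_add]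

def spBracketX [Fintype n] (X₁ Y₁ X₂ Y₂ : Matrix n n R) : Matrix n n R :=
  X₁ * X₂ - X₂ * X₁ - Y₁.map conj * Y₂ + Y₂.map conj * Y₁

def spBracketY [Fintype n] (X₁ Y₁ X₂ Y₂ : Matrix n n R) : Matrix n n R :=
  Y₁ * X₂ - Y₂ * X₁ + X₁.map conj * Y₂ - X₂.map conj * Y₁

theorem map_conj_map_conj (M : Matrix n n R) : (M.map conj).map conj = M := by
  ext i j; simp

theorem spMatrix_commutator [Fintype n] (X₁ Y₁ X₂ Y₂ : Matrix n n R) :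
    spMatrix X₁ Y₁ * spMatrix X₂ Y₂ - spMatrix X₂ Y₂ * spMatrix X₁ Y₁ =
      spMatrix (spBracketX X₁ Y₁ X₂ Y₂) (spBracketY X₁ Y₁ X₂ Y₂) := by
  have map_add' := Matrix.map_add (m := n) (n := n) (conj : R → R) (map_add conj)
  have map_sub' := Matrix.map_sub (m := n) (n := n) (conj : R → R) (map_sub conj)
  rw [fromBlocks_multiply, fromBlocks_multiply, sub_eq_add_neg, fromBlocks_neg, fromBlocks_add,
    fromBlocks_inj]
  simp only [spBracketX, spBracketY, map_add', map_sub', Matrix.map_mul, map_conj_map_conj]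
  refine ⟨by noncomm_ring, by noncomm_ring, by noncomm_ring, by noncomm_ring⟩

theorem transpose_eq_neg_map_conj {X : Matrix n n R} (hX : Xᴴ = -X) : Xᵀ = -X.map conj := by
  ext i j
  simpa [starRingEnd_apply] using congr(star ($hX i j))

theorem transpose_map_conj_eq_neg {X : Matrix n n R} (hX : Xᴴ = -X) : (X.map conj)ᵀ = -X :=
  hX

theorem conjTranspose_eq_map_conj {Y : Matrix n n R} (hY : Yᵀ = Y) : Yᴴ = Y.map conj := by
  rw [conjTranspose, hY]; rfl

theorem conjTranspose_map_conj {Y : Matrix n n R} (hY : Yᵀ = Y) : (Y.map conj)ᴴ = Y := by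
  ext i j
  simpa [starRingEnd_apply] using congr_fun₂ hY i j

theorem conjTranspose_spBracketX [Fintype n] {X₁ Y₁ X₂ Y₂ : Matrix n n R} (hX₁ : X₁ᴴ = -X₁)
    (hX₂ : X₂ᴴ = -X₂) (hY₁ : Y₁ᵀ = Y₁) (hY₂ : Y₂ᵀ = Y₂) :
    (spBracketX X₁ Y₁ X₂ Y₂)ᴴ = -spBracketX X₁ Y₁ X₂ Y₂ := by
  simp only [spBracketX, conjTranspose_add, conjTranspose_sub, conjTranspose_mul, hX₁, hX₂,
    conjTranspose_map_conj hY₁, conjTranspose_map_conj hY₂, conjTranspose_eq_map_conj hY₁,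
    conjTranspose_eq_map_conj hY₂]
  noncomm_ring

theorem transpose_spBracketY [Fintype n] {X₁ Y₁ X₂ Y₂ : Matrix n n R} (hX₁ : X₁ᴴ = -X₁)
    (hX₂ : X₂ᴴ = -X₂) (hY₁ : Y₁ᵀ = Y₁) (hY₂ : Y₂ᵀ = Y₂) :
    (spBracketY X₁ Y₁ X₂ Y₂)ᵀ = spBracketY X₁ Y₁ X₂ Y₂ := by
  simp only [spBracketY, transpose_add, transpose_sub, transpose_mul, hY₁, hY₂,
    transpose_eq_neg_map_conj hX₁, transpose_eq_neg_map_conj hX₂,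
    transpose_map_conj_eq_neg hX₁, transpose_map_conj_eq_neg hX₂]
  noncomm_ring

variable [Fintype n] {ι : Type*} {b : n → ι} {SX SY TX TY : SetRel ι ι}
  {X₁ Y₁ X₂ Y₂ : Matrix n n R}

theorem BlockSupported.spBracketX (hX₁ : BlockSupported b SX X₁) (hY₁ : BlockSupported b SY Y₁)
    (hX₂ : BlockSupported b TX X₂) (hY₂ : BlockSupported b TY Y₂) :
    BlockSupported b ((SX ○ TX) ∪ (TX ○ SX) ∪ (SY ○ TY) ∪ (TY ○ SY))
      (spBracketX X₁ Y₁ X₂ Y₂) := by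
  have hcY₁ := hY₁.map (map_zero conj)
  have hcY₂ := hY₂.map (map_zero conj)
  refine (((hX₁.mul hX₂).mono ?_).sub ((hX₂.mul hX₁).mono ?_)).sub
    ((hcY₁.mul hY₂).mono ?_) |>.add ((hcY₂.mul hY₁).mono ?_) <;>
    intro _ h <;> simp only [Set.mem_union] <;> tauto

theorem BlockSupported.spBracketY (hX₁ : BlockSupported b SX X₁) (hY₁ : BlockSupported b SY Y₁)
    (hX₂ : BlockSupported b TX X₂) (hY₂ : BlockSupported b TY Y₂) :
    BlockSupported b ((SY ○ TX) ∪ (TY ○ SX) ∪ (SX ○ TY) ∪ (TX ○ SY))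
      (spBracketY X₁ Y₁ X₂ Y₂) := by
  have hcX₁ := hX₁.map (map_zero conj)
  have hcX₂ := hX₂.map (map_zero conj)
  refine (((hY₁.mul hX₂).mono ?_).sub ((hY₂.mul hX₁).mono ?_)).add
    ((hcX₁.mul hY₂).mono ?_) |>.sub ((hcX₂.mul hY₁).mono ?_) <;>
    intro _ h <;> simp only [Set.mem_union] <;> tauto

end SpMatrix

section SpBlockSet2

variable {p q : ℕ} {SX SY TX TY : SetRel (Fin 2) (Fin 2)}
  {Z W : Matrix (Fin (p + q) ⊕ Fin (p + q)) (Fin (p + q) ⊕ Fin (p + q)) ℂ}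

theorem spBlockSet2_mono (hX : SX ⊆ TX) (hY : SY ⊆ TY) :
    spBlockSet2 p q SX SY ⊆ spBlockSet2 p q TX TY := by
  rintro _ ⟨X, Y, hXH, hYT, hSX, hSY, rfl⟩
  exact ⟨X, Y, hXH, hYT, BlockSupported.mono hSX hX, BlockSupported.mono hSY hY, rfl⟩

theorem commutator_mem_spBlockSet2 (hZ : Z ∈ spBlockSet2 p q SX SY)
    (hW : W ∈ spBlockSet2 p q TX TY) :
    Z * W - W * Z ∈ spBlockSet2 p q ((SX ○ TX) ∪ (TX ○ SX) ∪ (SY ○ TY) ∪ (TY ○ SY))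
      ((SY ○ TX) ∪ (TY ○ SX) ∪ (SX ○ TY) ∪ (TX ○ SY)) := by
  obtain ⟨X₁, Y₁, hX₁, hY₁, hSX₁, hSY₁, rfl⟩ := hZ
  obtain ⟨X₂, Y₂, hX₂, hY₂, hSX₂, hSY₂, rfl⟩ := hW
  exact ⟨_, _, conjTranspose_spBracketX hX₁ hX₂ hY₁ hY₂, transpose_spBracketY hX₁ hX₂ hY₁ hY₂,
    BlockSupported.spBracketX hSX₁ hSY₁ hSX₂ hSY₂, BlockSupported.spBracketY hSX₁ hSY₁ hSX₂ hSY₂,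
    spMatrix_commutator X₁ Y₁ X₂ Y₂⟩

theorem spMatrix_blockMask_mem {X Y : Matrix (Fin (p + q)) (Fin (p + q)) ℂ} (hX : Xᴴ = -X)
    (hY : Yᵀ = Y) (hSX : BlockSupported (blockOf2 p q) SX X)
    (hSY : BlockSupported (blockOf2 p q) SY Y) (MX MY : SetRel (Fin 2) (Fin 2)) [MX.IsSymm]
    [MY.IsSymm] :
    spMatrix (blockMask (blockOf2 p q) MX X) (blockMask (blockOf2 p q) MY Y) ∈
      spBlockSet2 p q (SX ∩ MX) (SY ∩ MY) :=
  ⟨_, _, by rw [conjTranspose_blockMask, hX, blockMask_neg], by rw [transpose_blockMask, hY],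
    hSX.blockMask MX, hSY.blockMask MY, rfl⟩

theorem exists_hSub_spqSub_n3Sub_eq_add
    (hZ : Z ∈ spBlockSet2 p q {(0, 0), (1, 1)} {(0, 0), (1, 1)}) :
    ∃ A ∈ hSub p q, ∃ B ∈ spqSub p q, ∃ C ∈ n3Sub p q, Z = A + B + C := by
  obtain ⟨X, Y, hX, hY, hSX, hSY, rfl⟩ := hZ
  refine ⟨_, spBlockSet2_mono Set.inter_subset_right Set.inter_subset_right
      (spMatrix_blockMask_mem hX hY hSX hSY {(0, 0)} ∅),
    _, spBlockSet2_mono Set.inter_subset_right Set.inter_subset_right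
      (spMatrix_blockMask_mem hX hY hSX hSY {(1, 1)} {(1, 1)}),
    _, spBlockSet2_mono Set.inter_subset_right Set.inter_subset_right
      (spMatrix_blockMask_mem hX hY hSX hSY ∅ {(0, 0)}), ?_⟩
  rw [← spMatrix_add, ← spMatrix_add, ← blockMask_union, ← blockMask_union, ← blockMask_union,
    ← blockMask_union, blockMask_eq_self hSX, blockMask_eq_self hSY]
  all_goals simp [Set.subset_def, Set.disjoint_left]

end SpBlockSet2

theorem bracket_relations_flag_general (p q : ℕ) :
    (∀ Z ∈ n3Sub p q, ∀ W ∈ n3Sub p q, Z * W - W * Z ∈ hSub p q) ∧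
    (∀ Z ∈ n2Sub p q, ∀ W ∈ n3Sub p q, Z * W - W * Z ∈ n2Sub p q) ∧
    (∀ Z ∈ n2Sub p q, ∀ W ∈ n2Sub p q,
      ∃ A ∈ hSub p q, ∃ B ∈ spqSub p q, ∃ C ∈ n3Sub p q, Z * W - W * Z = A + B + C) := by
  refine ⟨fun Z hZ W hW => spBlockSet2_mono ?_ ?_ (commutator_mem_spBlockSet2 hZ hW),
    fun Z hZ W hW => spBlockSet2_mono ?_ ?_ (commutator_mem_spBlockSet2 hZ hW),
    fun Z hZ W hW => exists_hSub_spqSub_n3Sub_eq_add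
      (spBlockSet2_mono ?_ ?_ (commutator_mem_spBlockSet2 hZ hW))⟩
  all_goals
    simp [Set.subset_def, Fin.forall_fin_two, Fin.exists_fin_two]

/-- **Bracket relations (3.6).**  (i) `[n₃, n₃] ⊆ h`;  (ii) `[n₂, n₃] ⊆ n₂;
(iii) `[n₂, n₂] ⊆ h ⊕ sp(q) ⊕ n₃`. -/
theorem bracket_relations_flag (p q : ℕ) (hp : 1 ≤ p) (hq : 1 ≤ q) :
    (∀ Z ∈ n3Sub p q, ∀ W ∈ n3Sub p q, Z * W - W * Z ∈ hSub p q) ∧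
    (∀ Z ∈ n2Sub p q, ∀ W ∈ n3Sub p q, Z * W - W * Z ∈ n2Sub p q) ∧
    (∀ Z ∈ n2Sub p q, ∀ W ∈ n2Sub p q,
      ∃ A ∈ hSub p q, ∃ B ∈ spqSub p q, ∃ C ∈ n3Sub p q, Z * W - W * Z = A + B + C) :=
  bracket_relations_flag_general p q
end

section
/- With the notation below, let a, b ∈ {1,2,3} be distinct, let {f_i} be any orthonormal basis of p_{ab} and {e_γ} any orthonormal basis of p_a, both with respect to the inner product ⟨·,·⟩. Then Σ_{i,j,γ} ⟨[f_i, f_j], e_γ⟩² = k_a k_b (2k_a+1)/(n+1), where the sum is over all pairs of basis elements of p_{ab} and all basis elements of p_a. -/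
open Matrix

/-- The inner product `⟨Z, W⟩ = −2(n+1)·tr(Z W)` (the negative of the Killing form of
`sp(n)`), with values in `ℂ`; it is real and positive definite on `sp(n)`. -/
noncomputable def spInner (k : Fin 3 → ℕ)
    (Z W : Matrix (Fin (blockTotal k) ⊕ Fin (blockTotal k))
      (Fin (blockTotal k) ⊕ Fin (blockTotal k)) ℂ) : ℂ :=
  -(2 * ((blockTotal k : ℂ) + 1)) * Matrix.trace (Z * W)

/-!
Write `σ M = J⁻¹ Mᵀ J`; then `sp(n)` consists of the skew-Hermitian `Z` with `σ Z = -Z`.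
By invariance of the trace form,
`∑ⱼ ⟨[fᵢ, fⱼ], e_γ⟩² = ∑ⱼ ⟨[e_γ, fᵢ], fⱼ⟩² = ⟨[e_γ, fᵢ], [e_γ, fᵢ]⟩`, and as `e_γ fᵢ e_γ = 0`
for block reasons this is `4(n+1) tr(e_γ² fᵢ²)`. So the sum equals
`4(n+1) tr((∑_γ e_γ²)(∑ᵢ fᵢ²))`.

Both sums of squares are diagonal. For an orthonormal basis `g` of `p_S`, Parseval's identity
applied to the `σ`-skew parts of matrix units (which lie in the complex span of `p_S`) gives
`∑ᵢ gᵢ(p,q) gᵢ(q,r) = -(δ_pr + J_pq J_rq)/(4(n+1))` whenever `(block p, block q) ∈ S`. Summing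
over `q`, on the `2kₐ` indices of block `a` the diagonal entries of `∑ e_γ²` and `∑ fᵢ²` are
`-(2kₐ+1)/(4(n+1))` and `-2k_b/(4(n+1))`.
-/

open Matrix SetRel Finset

namespace Matrix

variable {l β R : Type*}

section Support

def IsSupportedIn [Zero R] (c : l → β) (S : SetRel β β) (M : Matrix l l R) : Prop :=
  ∀ p q, M p q ≠ 0 → (c p, c q) ∈ S

variable {c : l → β} {S T : SetRel β β}

theorem IsSupportedIn.mono [Zero R] {M : Matrix l l R} (hM : IsSupportedIn c S M) (hST : S ⊆ T) :
    IsSupportedIn c T M :=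
  fun p q h => hST (hM p q h)

theorem IsSupportedIn.eq_zero [Zero R] {M : Matrix l l R} (hM : IsSupportedIn c ∅ M) : M = 0 := by
  ext p q
  by_contra h
  exact hM p q h

theorem isSupportedIn_single [Zero R] [DecidableEq l] {i j : l} (h : (c i, c j) ∈ S) (x : R) :
    IsSupportedIn c S (single i j x) := by
  intro p q hpq
  obtain ⟨rfl, rfl⟩ : i = p ∧ j = q := by
    by_contra hij
    exact hpq (if_neg hij)
  exact h

theorem IsSupportedIn.neg [SubtractionMonoid R] {M : Matrix l l R} (hM : IsSupportedIn c S M) :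
    IsSupportedIn c S (-M) :=
  fun p q h => hM p q (by simpa using h)

theorem IsSupportedIn.add [AddZeroClass R] {A B : Matrix l l R} (hA : IsSupportedIn c S A)
    (hB : IsSupportedIn c S B) : IsSupportedIn c S (A + B) := by
  intro p q h
  by_cases hAp : A p q = 0
  · exact hB p q fun hBp => h (by simp [hAp, hBp])
  · exact hA p q hAp

theorem IsSupportedIn.sub [AddGroup R] {A B : Matrix l l R} (hA : IsSupportedIn c S A)
    (hB : IsSupportedIn c S B) : IsSupportedIn c S (A - B) := by
  simpa [sub_eq_add_neg] using hA.add hB.neg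

theorem IsSupportedIn.smul {K : Type*} [Zero R] [SMulZeroClass K R] {M : Matrix l l R}
    (hM : IsSupportedIn c S M) (x : K) : IsSupportedIn c S (x • M) :=
  fun p q h => hM p q fun h0 => h (by simp [h0])

theorem IsSupportedIn.transpose [Zero R] {M : Matrix l l R} (hM : IsSupportedIn c S M) :
    IsSupportedIn c S.inv Mᵀ :=
  fun p q h => hM q p h

theorem IsSupportedIn.conjTranspose [AddMonoid R] [StarAddMonoid R] {M : Matrix l l R}
    (hM : IsSupportedIn c S M) : IsSupportedIn c S.inv Mᴴ :=
  fun p q h => hM q p (by simpa using h)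

theorem IsSupportedIn.map {R' : Type*} [Zero R] [Zero R'] {M : Matrix l l R}
    (hM : IsSupportedIn c S M) {f : R → R'} (hf : f 0 = 0) : IsSupportedIn c S (M.map f) :=
  fun p q h => hM p q fun h0 => h (by simp [h0, hf])

theorem isSupportedIn_fromBlocks_iff [Zero R] {A B C D : Matrix l l R} :
    IsSupportedIn (Sum.elim c c) S (fromBlocks A B C D) ↔
      IsSupportedIn c S A ∧ IsSupportedIn c S B ∧ IsSupportedIn c S C ∧ IsSupportedIn c S D := by
  simp only [IsSupportedIn, Sum.forall, fromBlocks_apply₁₁, fromBlocks_apply₁₂, fromBlocks_apply₂₁,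
    fromBlocks_apply₂₂, Sum.elim_inl, Sum.elim_inr, forall_and]
  tauto

theorem IsSupportedIn.mul [Fintype l] [NonUnitalNonAssocSemiring R] {A B : Matrix l l R}
    (hA : IsSupportedIn c S A) (hB : IsSupportedIn c T B) : IsSupportedIn c (S ○ T) (A * B) := by
  intro p q h
  obtain ⟨r, -, hr⟩ := Finset.exists_ne_zero_of_sum_ne_zero h
  exact prodMk_mem_comp (hA p r (left_ne_zero_of_mul hr)) (hB r q (right_ne_zero_of_mul hr))

end Support

section Symplectic

variable [DecidableEq l] [CommRing R]

theorem J_apply_eq_zero_of_ne_swap {p q : l ⊕ l} (h : q ≠ p.swap) : J l R p q = 0 := by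
  rcases p with i | i <;> rcases q with j | j <;> simp_all [J, eq_comm]

theorem J_apply_swap_mul_J_apply_swap (p r : l ⊕ l) :
    J l R p p.swap * J l R r p.swap = if p = r then 1 else 0 := by
  rcases p with i | i <;> rcases r with j | j <;> by_cases h : i = j <;> simp [J, h, @eq_comm _ j i]

theorem isSupportedIn_J (c : l → β) : IsSupportedIn (Sum.elim c c) .id (J l R) := by
  intro p q h
  obtain rfl : q = p.swap := by
    by_contra hq
    exact h (J_apply_eq_zero_of_ne_swap hq)
  rcases p with i | i <;> rfl

theorem J_conjTranspose [StarRing R] : (J l R)ᴴ = -J l R := by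
  simp [J, fromBlocks_conjTranspose, fromBlocks_neg]

variable [Fintype l]

theorem sum_ite_J_apply_mul_J_apply (P : l ⊕ l → Prop) [DecidablePred P] (p r : l ⊕ l) :
    ∑ q, (if P q then J l R p q * J l R r q else 0) = if P p.swap ∧ p = r then 1 else 0 := by
  rw [Finset.sum_eq_single p.swap, J_apply_swap_mul_J_apply_swap, ite_and]
  · intro q _ hq
    simp [J_apply_eq_zero_of_ne_swap hq]
  · simp

variable (l R) in
/-- The symplectic adjoint `J⁻¹ Mᵀ J` (recall `J⁻¹ = -J`). -/
def symplecticAdjoint : Matrix (l ⊕ l) (l ⊕ l) R →ₗ[R] Matrix (l ⊕ l) (l ⊕ l) R where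
  toFun M := -(J l R * Mᵀ * J l R)
  map_add' A B := by simp [Matrix.mul_add, Matrix.add_mul]; abel
  map_smul' x M := by simp

local notation "σ" => symplecticAdjoint l R

theorem symplecticAdjoint_apply (M : Matrix (l ⊕ l) (l ⊕ l) R) : σ M = -(J l R * Mᵀ * J l R) :=
  rfl

theorem symplecticAdjoint_symplecticAdjoint (M : Matrix (l ⊕ l) (l ⊕ l) R) : σ (σ M) = M := by
  simp only [symplecticAdjoint_apply, transpose_neg, transpose_mul, J_transpose, neg_neg,
    Matrix.mul_neg, Matrix.neg_mul, transpose_transpose, ← Matrix.mul_assoc, J_squared]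
  simp [Matrix.mul_assoc, J_squared]

theorem symplecticAdjoint_mul (A B : Matrix (l ⊕ l) (l ⊕ l) R) : σ (A * B) = σ B * σ A := by
  simp only [symplecticAdjoint_apply, transpose_mul, Matrix.neg_mul, Matrix.mul_neg, neg_neg]
  simp [Matrix.mul_assoc, ← Matrix.mul_assoc (J l R) (J l R), J_squared]

theorem trace_symplecticAdjoint_mul (A B : Matrix (l ⊕ l) (l ⊕ l) R) :
    trace (σ A * B) = trace (A * σ B) := by
  rw [symplecticAdjoint_apply, symplecticAdjoint_apply, Matrix.neg_mul, Matrix.mul_neg, trace_neg,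
    trace_neg, ← trace_transpose]
  simp only [transpose_mul, transpose_transpose, J_transpose, Matrix.mul_neg, Matrix.neg_mul,
    neg_neg]
  rw [trace_mul_comm]
  simp only [Matrix.mul_assoc]
  rw [trace_mul_comm (J l R)]
  simp only [Matrix.mul_assoc]

theorem symplecticAdjoint_conjTranspose [StarRing R] (M : Matrix (l ⊕ l) (l ⊕ l) R) :
    σ Mᴴ = (σ M)ᴴ := by
  simp [symplecticAdjoint_apply, conjTranspose_mul, J_conjTranspose, Matrix.mul_assoc]
  rfl

theorem symplecticAdjoint_fromBlocks (A B C D : Matrix l l R) :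
    σ (fromBlocks A B C D) = fromBlocks Dᵀ (-Bᵀ) (-Cᵀ) Aᵀ := by
  simp [symplecticAdjoint_apply, J, fromBlocks_transpose, fromBlocks_multiply, fromBlocks_neg]

theorem IsSupportedIn.symplecticAdjoint {c : l → β} {S : SetRel β β}
    {M : Matrix (l ⊕ l) (l ⊕ l) R} (hM : IsSupportedIn (Sum.elim c c) S M) :
    IsSupportedIn (Sum.elim c c) S.inv (σ M) := by
  rw [symplecticAdjoint_apply]
  simpa using (((isSupportedIn_J c).mul hM.transpose).mul (isSupportedIn_J c)).neg

end Symplectic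

theorem mul_single_mul_apply [Fintype l] [DecidableEq l] [Semiring R] (A B : Matrix l l R)
    (p q u v : l) (x : R) : (A * single p q x * B) u v = A u p * x * B q v := by
  simp [mul_apply, single_apply, ite_and]

section SkewPart

variable [DecidableEq l] [Fintype l] [Field R]

local notation "σ" => symplecticAdjoint l R

def symplecticSkewPart (M : Matrix (l ⊕ l) (l ⊕ l) R) : Matrix (l ⊕ l) (l ⊕ l) R :=
  (2⁻¹ : R) • (M - σ M)

theorem symplecticAdjoint_symplecticSkewPart (M : Matrix (l ⊕ l) (l ⊕ l) R) :
    σ (symplecticSkewPart M) = -symplecticSkewPart M := by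
  simp only [symplecticSkewPart, map_smul, map_sub, symplecticAdjoint_symplecticAdjoint,
    ← smul_neg, neg_sub]

theorem trace_symplecticSkewPart_mul [NeZero (2 : R)] (M : Matrix (l ⊕ l) (l ⊕ l) R)
    {Z : Matrix (l ⊕ l) (l ⊕ l) R} (hZ : σ Z = -Z) :
    trace (symplecticSkewPart M * Z) = trace (M * Z) := by
  rw [symplecticSkewPart, smul_mul, trace_smul, sub_mul, trace_sub, trace_symplecticAdjoint_mul,
    hZ, Matrix.mul_neg, trace_neg, sub_neg_eq_add, ← two_mul, smul_eq_mul,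
    inv_mul_cancel_left₀ two_ne_zero]

theorem symplecticSkewPart_single_apply (p q u v : l ⊕ l) :
    symplecticSkewPart (single p q 1) u v =
      2⁻¹ * ((if p = u ∧ q = v then 1 else 0) + J l R u q * J l R p v) := by
  simp [symplecticSkewPart, symplecticAdjoint_apply, transpose_single, mul_single_mul_apply,
    single_apply]

theorem IsSupportedIn.symplecticSkewPart {c : l → β} {S : SetRel β β} [S.IsSymm]
    {M : Matrix (l ⊕ l) (l ⊕ l) R} (hM : IsSupportedIn (Sum.elim c c) S M) :
    IsSupportedIn (Sum.elim c c) S (symplecticSkewPart M) :=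
  (hM.sub (hM.symplecticAdjoint.mono (inv_eq_self S).le)).smul _

end SkewPart

theorem trace_commutator_mul [Fintype l] [CommRing R] (x y z : Matrix l l R) :
    trace ((x * y - y * x) * z) = trace (y * (z * x - x * z)) := by
  rw [Matrix.sub_mul, Matrix.mul_sub, trace_sub, trace_sub, Matrix.mul_assoc, trace_mul_comm x,
    Matrix.mul_assoc, Matrix.mul_assoc]

theorem trace_commutator_mul_self_of_mul_mul_eq_zero [Fintype l] [CommRing R]
    {A B : Matrix l l R} (h : A * B * A = 0) :
    trace ((A * B - B * A) * (A * B - B * A)) = -2 * trace (A * A * (B * B)) := by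
  have hABAB : A * B * (A * B) = 0 := by rw [← Matrix.mul_assoc, h, Matrix.zero_mul]
  have hBABA : B * A * (B * A) = 0 := by
    rw [Matrix.mul_assoc, ← Matrix.mul_assoc A, h, Matrix.mul_zero]
  have hABBA : trace (A * B * (B * A)) = trace (A * A * (B * B)) := by
    rw [← Matrix.mul_assoc, trace_mul_comm, ← Matrix.mul_assoc, ← Matrix.mul_assoc,
      Matrix.mul_assoc (A * A)]
  have hBAAB : trace (B * A * (A * B)) = trace (A * A * (B * B)) := by
    rw [Matrix.mul_assoc B, trace_mul_comm B, ← Matrix.mul_assoc, Matrix.mul_assoc (A * A)]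
  rw [Matrix.sub_mul, Matrix.mul_sub, Matrix.mul_sub, trace_sub, trace_sub, trace_sub, hABAB,
    hBABA, hABBA, hBAAB, trace_zero]
  ring

end Matrix

theorem LinearMap.sum_apply_mul_apply_of_mem_span {R M ι : Type*} [CommSemiring R]
    [AddCommMonoid M] [Module R M] [Fintype ι] [DecidableEq ι] (B : M →ₗ[R] M →ₗ[R] R)
    {g : ι → M} (hg : ∀ i j, B (g i) (g j) = if i = j then 1 else 0) {W : M}
    (hW : W ∈ Submodule.span R (Set.range g)) (W' : M) :
    ∑ i, B W (g i) * B (g i) W' = B W W' := by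
  obtain ⟨c, rfl⟩ := (Submodule.mem_span_range_iff_exists_fun R).1 hW
  simp [hg]

abbrev SpMatrix (k : Fin 3 → ℕ) :=
  Matrix (Fin (blockTotal k) ⊕ Fin (blockTotal k)) (Fin (blockTotal k) ⊕ Fin (blockTotal k)) ℂ

abbrev spBlock (k : Fin 3 → ℕ) : Fin (blockTotal k) ⊕ Fin (blockTotal k) → Fin 3 :=
  Sum.elim (blockOf k) (blockOf k)

theorem card_filter_blockOf_eq (k : Fin 3 → ℕ) (c : Fin 3) :
    #{i | blockOf k i = c} = k c := by
  set o : ℕ := ![0, k 0, k 0 + k 1] c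
  have hle : o + k c ≤ blockTotal k := by fin_cases c <;> simp [o, blockTotal]; omega
  have hmem (i : Fin (blockTotal k)) : blockOf k i = c ↔ (i : ℕ) ∈ Ico o (o + k c) := by
    have := i.isLt
    fin_cases c <;> simp only [blockOf, o, mem_Ico] <;> split_ifs <;> simp <;> omega
  have himage : map Fin.valEmbedding {i | blockOf k i = c} = Ico o (o + k c) := by
    ext x
    simp only [mem_map, mem_filter, mem_univ, true_and, Fin.valEmbedding_apply, hmem]
    exact ⟨fun ⟨i, hi, hx⟩ => hx ▸ hi, fun hx => ⟨⟨x, by simp at hx; omega⟩, hx, rfl⟩⟩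
  rw [← card_map, himage, Nat.card_Ico, Nat.add_sub_cancel_left]

theorem card_filter_spBlock_eq (k : Fin 3 → ℕ) (c : Fin 3) :
    #{q | spBlock k q = c} = 2 * k c := by
  have hleft : ({q | spBlock k q = c} : Finset _).toLeft = ({i | blockOf k i = c} : Finset _) := by
    ext; simp
  have hright :
      ({q | spBlock k q = c} : Finset _).toRight = ({i | blockOf k i = c} : Finset _) := by
    ext; simp
  rw [← card_toLeft_add_card_toRight, hleft, hright, card_filter_blockOf_eq, two_mul]

section SpBlockSet

variable {k : Fin 3 → ℕ}

theorem mem_spBlockSet_iff {S : SetRel (Fin 3) (Fin 3)} {Z : SpMatrix k} :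
    Z ∈ spBlockSet k S ↔
      Zᴴ = -Z ∧ symplecticAdjoint _ ℂ Z = -Z ∧ IsSupportedIn (spBlock k) S Z := by
  obtain ⟨A, B, C, D, rfl⟩ : ∃ A B C D, Z = fromBlocks A B C D :=
    ⟨_, _, _, _, (fromBlocks_toBlocks Z).symm⟩
  rw [isSupportedIn_fromBlocks_iff, fromBlocks_conjTranspose, symplecticAdjoint_fromBlocks,
    fromBlocks_neg, fromBlocks_inj, fromBlocks_inj]
  constructor
  · rintro ⟨X, Y, hX, hY, hXS, hYS, h⟩
    obtain ⟨rfl, rfl, rfl, rfl⟩ := fromBlocks_inj.1 h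
    have hXe (i j) : starRingEnd ℂ (A j i) = -A i j := by simpa using congr_fun₂ hX i j
    have hYe (i j) : C j i = C i j := congr_fun₂ hY i j
    replace hXS : IsSupportedIn (blockOf k) S A := hXS
    replace hYS : IsSupportedIn (blockOf k) S C := hYS
    refine ⟨⟨hX, ?_, ?_, ?_⟩, ⟨?_, ?_, ?_, ?_⟩, hXS, (hYS.map (map_zero _)).neg, hYS,
      hXS.map (map_zero _)⟩
    all_goals ext i j
    all_goals simp [hXe, hYe i j]
  · rintro ⟨⟨hA, hCB, -, -⟩, ⟨-, -, hC, hAD⟩, hAS, -, hCS, -⟩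
    refine ⟨A, C, hA, neg_inj.1 hC, hAS, hCS, ?_⟩
    rw [fromBlocks_inj]
    refine ⟨rfl, ?_, rfl, ?_⟩ <;> ext i j
    · have h1 : starRingEnd ℂ (C j i) = -B i j := by simpa using congr_fun₂ hCB i j
      have h2 : C j i = C i j := congr_fun₂ (neg_inj.1 hC) i j
      simp [← h2, h1]
    · have h1 : starRingEnd ℂ (A i j) = -A j i := by simpa using congr_fun₂ hA j i
      have h2 : A j i = -D i j := congr_fun₂ hAD i j
      simp [h1, h2]

/-- `spBlockSet k S` is a real form of the space of `σ`-skew matrices supported in `S`. -/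
theorem mem_span_spBlockSet {S : SetRel (Fin 3) (Fin 3)} [S.IsSymm] {M : SpMatrix k}
    (hσ : symplecticAdjoint _ ℂ M = -M) (hM : IsSupportedIn (spBlock k) S M) :
    M ∈ Submodule.span ℂ (spBlockSet k S) := by
  have hσH : symplecticAdjoint _ ℂ Mᴴ = -Mᴴ := by
    rw [symplecticAdjoint_conjTranspose, hσ, conjTranspose_neg]
  have hMH : IsSupportedIn (spBlock k) S Mᴴ := hM.conjTranspose.mono (inv_eq_self S).le
  have hA : (2⁻¹ : ℂ) • (M - Mᴴ) ∈ spBlockSet k S := by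
    refine mem_spBlockSet_iff.2 ⟨?_, ?_, (hM.sub hMH).smul _⟩
    · simp [conjTranspose_smul]; module
    · simp [hσ, hσH]; module
  have hB : (-(Complex.I / 2)) • (M + Mᴴ) ∈ spBlockSet k S := by
    refine mem_spBlockSet_iff.2 ⟨?_, ?_, (hM.add hMH).smul _⟩
    · simp [conjTranspose_smul]; module
    · simp [hσ, hσH]; module
  have hdecomp : M = (2⁻¹ : ℂ) • (M - Mᴴ) + Complex.I • (-(Complex.I / 2)) • (M + Mᴴ) := by
    ext p q
    simp only [Matrix.add_apply, Matrix.smul_apply, Matrix.sub_apply, smul_eq_mul]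
    linear_combination (M p q + Mᴴ p q) / 2 * Complex.I_sq
  rw [hdecomp]
  exact Submodule.add_mem _ (Submodule.subset_span hA)
    (Submodule.smul_mem _ _ (Submodule.subset_span hB))

theorem commutator_mem_spBlockSet {S T U : SetRel (Fin 3) (Fin 3)} {A B : SpMatrix k}
    (hA : A ∈ spBlockSet k S) (hB : B ∈ spBlockSet k T) (hST : S ○ T ⊆ U) (hTS : T ○ S ⊆ U) :
    A * B - B * A ∈ spBlockSet k U := by
  obtain ⟨hAH, hAσ, hAS⟩ := mem_spBlockSet_iff.1 hA
  obtain ⟨hBH, hBσ, hBT⟩ := mem_spBlockSet_iff.1 hB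
  refine mem_spBlockSet_iff.2 ⟨?_, ?_, ((hAS.mul hBT).mono hST).sub ((hBT.mul hAS).mono hTS)⟩
  · simp [conjTranspose_mul, hAH, hBH]
  · simp [symplecticAdjoint_mul, hAσ, hBσ]

variable {a b : Fin 3}

theorem commutator_mem_pOff {e f : SpMatrix k} (he : e ∈ pDiag k a) (hf : f ∈ pOff k a b) :
    e * f - f * e ∈ pOff k a b := by
  refine commutator_mem_spBlockSet he hf ?_ ?_ <;>
    rintro ⟨x, y⟩ ⟨z, hxz, hzy⟩ <;> simp_all

theorem mul_mul_eq_zero_of_mem_pDiag_of_mem_pOff (hab : a ≠ b) {e f : SpMatrix k}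
    (he : e ∈ pDiag k a) (hf : f ∈ pOff k a b) : e * f * e = 0 := by
  have heS := (mem_spBlockSet_iff.1 he).2.2
  refine (((heS.mul (mem_spBlockSet_iff.1 hf).2.2).mul heS).mono ?_).eq_zero
  rintro ⟨x, y⟩ ⟨z, ⟨w, hxw, hwz⟩, hzy⟩
  simp_all

theorem spInner_commutator_self_of_mem_pDiag_of_mem_pOff (hab : a ≠ b) {e f : SpMatrix k}
    (he : e ∈ pDiag k a) (hf : f ∈ pOff k a b) :
    spInner k (e * f - f * e) (e * f - f * e) =
      4 * ((blockTotal k : ℂ) + 1) * trace (e * e * (f * f)) := by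
  rw [spInner, trace_commutator_mul_self_of_mul_mul_eq_zero
    (mul_mul_eq_zero_of_mem_pDiag_of_mem_pOff hab he hf)]
  ring

end SpBlockSet

noncomputable def spInnerBilin (k : Fin 3 → ℕ) : SpMatrix k →ₗ[ℂ] SpMatrix k →ₗ[ℂ] ℂ :=
  LinearMap.mk₂ ℂ (spInner k)
    (fun _ _ _ => by simp only [spInner, Matrix.add_mul, trace_add]; ring)
    (fun _ _ _ => by simp only [spInner, Matrix.smul_mul, trace_smul, smul_eq_mul]; ring)
    (fun _ _ _ => by simp only [spInner, Matrix.mul_add, trace_add]; ring)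
    (fun _ _ _ => by simp only [spInner, Matrix.mul_smul, trace_smul, smul_eq_mul]; ring)

theorem spInner_comm (k : Fin 3 → ℕ) (Z W : SpMatrix k) : spInner k Z W = spInner k W Z := by
  rw [spInner, trace_mul_comm, spInner]

structure IsSpOrthonormalBasis (k : Fin 3 → ℕ) (S : SetRel (Fin 3) (Fin 3)) {ι : Type*}
    [DecidableEq ι] (g : ι → SpMatrix k) : Prop where
  mem : ∀ i, g i ∈ spBlockSet k S
  span : ∀ Z ∈ spBlockSet k S, Z ∈ Submodule.span ℝ (Set.range g)
  inner : ∀ i j, spInner k (g i) (g j) = if i = j then 1 else 0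

namespace IsSpOrthonormalBasis

variable {k : Fin 3 → ℕ} {S : SetRel (Fin 3) (Fin 3)} {ι : Type*} [DecidableEq ι]
  {g : ι → SpMatrix k}

theorem span_complex_le (hg : IsSpOrthonormalBasis k S g) :
    Submodule.span ℂ (spBlockSet k S) ≤ Submodule.span ℂ (Set.range g) :=
  Submodule.span_le.2 fun Z hZ => Submodule.span_subset_span ℝ ℂ _ (hg.span Z hZ)

variable [Fintype ι]

theorem sum_spInner_mul_spInner (hg : IsSpOrthonormalBasis k S g) {W : SpMatrix k}
    (hW : W ∈ Submodule.span ℂ (spBlockSet k S)) (W' : SpMatrix k) :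
    ∑ i, spInner k W (g i) * spInner k (g i) W' = spInner k W W' :=
  (spInnerBilin k).sum_apply_mul_apply_of_mem_span hg.inner (hg.span_complex_le hW) W'

theorem sum_sq_spInner_commutator (hg : IsSpOrthonormalBasis k S g) (e : SpMatrix k) (i : ι)
    (hW : e * g i - g i * e ∈ spBlockSet k S) :
    ∑ j, spInner k (g i * g j - g j * g i) e ^ 2 =
      spInner k (e * g i - g i * e) (e * g i - g i * e) := by
  have hinv (j) : spInner k (g i * g j - g j * g i) e = spInner k (e * g i - g i * e) (g j) := by
    rw [spInner, trace_commutator_mul, trace_mul_comm, ← spInner]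
  simp_rw [hinv, sq]
  conv_lhs => enter [2, j, 2]; rw [spInner_comm]
  exact hg.sum_spInner_mul_spInner (Submodule.subset_span hW) _

/-- The coefficient `Z p q` of a `σ`-skew `Z` is, up to the factor `-2(n+1)`, its inner product
with the `σ`-skew part of the matrix unit `single q p 1`; Parseval does the rest. -/
theorem sum_apply_mul_apply [S.IsSymm] (hg : IsSpOrthonormalBasis k S g)
    {p q : Fin (blockTotal k) ⊕ Fin (blockTotal k)} (hpq : (spBlock k p, spBlock k q) ∈ S)
    (r s : Fin (blockTotal k) ⊕ Fin (blockTotal k)) :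
    ∑ i, g i p q * g i r s =
      -symplecticSkewPart (single s r 1) p q / (2 * ((blockTotal k : ℂ) + 1)) := by
  have hN : (blockTotal k : ℂ) + 1 ≠ 0 := Nat.cast_add_one_ne_zero _
  have hσ (i) : symplecticAdjoint _ ℂ (g i) = -g i := (mem_spBlockSet_iff.1 (hg.mem i)).2.1
  have hcoord (Z : SpMatrix k) (hZ : symplecticAdjoint _ ℂ Z = -Z) (p q) :
      Z p q =
        -spInner k (symplecticSkewPart (single q p 1)) Z / (2 * ((blockTotal k : ℂ) + 1)) := by
    rw [spInner, trace_symplecticSkewPart_mul _ hZ, trace_single_mul, one_smul]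
    field_simp
  have hD : symplecticSkewPart (single q p 1) ∈ Submodule.span ℂ (spBlockSet k S) :=
    mem_span_spBlockSet (symplecticAdjoint_symplecticSkewPart _)
      (isSupportedIn_single (S.symm hpq) 1).symplecticSkewPart
  calc ∑ i, g i p q * g i r s
      = (∑ i, spInner k (symplecticSkewPart (single q p 1)) (g i) *
            spInner k (g i) (symplecticSkewPart (single s r 1))) /
          (2 * ((blockTotal k : ℂ) + 1)) ^ 2 := by
        rw [Finset.sum_div]
        refine Finset.sum_congr rfl fun i _ => ?_
        rw [hcoord _ (hσ i) p q, hcoord _ (hσ i) r s, spInner_comm k (g i)]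
        generalize 2 * ((blockTotal k : ℂ) + 1) = c
        ring
    _ = _ := by
        rw [hg.sum_spInner_mul_spInner hD,
          hcoord _ (symplecticAdjoint_symplecticSkewPart _) p q]
        field_simp

theorem sum_mul_self [S.IsSymm] [DecidablePred (· ∈ S)] (hg : IsSpOrthonormalBasis k S g) :
    ∑ i, g i * g i = diagonal fun p =>
      -((#{q | (spBlock k p, spBlock k q) ∈ S} : ℂ) +
        if (spBlock k p, spBlock k p) ∈ S then 1 else 0) / (4 * ((blockTotal k : ℂ) + 1)) := by
  have hN : (blockTotal k : ℂ) + 1 ≠ 0 := Nat.cast_add_one_ne_zero _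
  ext p r
  have hterm (q) : ∑ i, g i p q * g i q r =
      -((if (spBlock k p, spBlock k q) ∈ S then (if p = r then 1 else 0) else 0) +
        if (spBlock k p, spBlock k q) ∈ S then J _ ℂ p q * J _ ℂ r q else 0) /
          (4 * ((blockTotal k : ℂ) + 1)) := by
    by_cases hpq : (spBlock k p, spBlock k q) ∈ S
    · rw [hg.sum_apply_mul_apply hpq, symplecticSkewPart_single_apply]
      simp only [if_pos hpq, and_true, eq_comm (a := r)]
      field_simp
      ring
    · simp only [if_neg hpq, add_zero, neg_zero, zero_div]
      refine sum_eq_zero fun i _ => ?_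
      by_contra h
      exact hpq ((mem_spBlockSet_iff.1 (hg.mem i)).2.2 p q (left_ne_zero_of_mul h))
  have hswap : spBlock k p.swap = spBlock k p := by rcases p with i | i <;> rfl
  rw [Matrix.sum_apply]
  simp_rw [mul_apply]
  rw [sum_comm, sum_congr rfl fun q _ => hterm q, ← sum_div, sum_neg_distrib,
    sum_add_distrib, sum_ite_J_apply_mul_J_apply, ← sum_filter, sum_const, nsmul_eq_mul,
    diagonal_apply, hswap]
  by_cases hpr : p = r <;> simp [hpr]

variable {a b : Fin 3}

theorem sum_mul_self_of_pDiag (hg : IsSpOrthonormalBasis k {(a, a)} g) :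
    ∑ i, g i * g i = diagonal fun p =>
      if spBlock k p = a then -(2 * k a + 1) / (4 * ((blockTotal k : ℂ) + 1)) else 0 := by
  classical
  have : SetRel.IsSymm ({(a, a)} : SetRel (Fin 3) (Fin 3)) := ⟨fun _ _ h => by simp_all⟩
  rw [hg.sum_mul_self]
  congr 1
  funext p
  by_cases hp : spBlock k p = a
  · simp [hp, card_filter_spBlock_eq]
  · simp [hp]

theorem sum_mul_self_apply_of_pOff (hab : a ≠ b) (hg : IsSpOrthonormalBasis k {(a, b), (b, a)} g)
    {p : Fin (blockTotal k) ⊕ Fin (blockTotal k)} (hp : spBlock k p = a) :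
    (∑ i, g i * g i) p p = -(2 * k b) / (4 * ((blockTotal k : ℂ) + 1)) := by
  classical
  have : SetRel.IsSymm ({(a, b), (b, a)} : SetRel (Fin 3) (Fin 3)) :=
    ⟨fun _ _ h => by
      simp only [Set.mem_insert_iff, Set.mem_singleton_iff, Prod.mk.injEq] at h ⊢; tauto⟩
  rw [hg.sum_mul_self]
  simp [hp, hab, card_filter_spBlock_eq]

theorem trace_sum_mul_self_mul_sum_mul_self {κ : Type*} [Fintype κ] [DecidableEq κ]
    {e : κ → SpMatrix k} (hab : a ≠ b) (he : IsSpOrthonormalBasis k {(a, a)} e)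
    (hg : IsSpOrthonormalBasis k {(a, b), (b, a)} g) :
    trace ((∑ γ, e γ * e γ) * ∑ i, g i * g i) =
      k a * k b * (2 * k a + 1) / (4 * ((blockTotal k : ℂ) + 1) ^ 2) := by
  have hN : (blockTotal k : ℂ) + 1 ≠ 0 := Nat.cast_add_one_ne_zero _
  rw [he.sum_mul_self_of_pDiag, trace]
  simp only [Matrix.diag_apply, diagonal_mul, ite_mul, zero_mul]
  rw [← sum_filter, sum_congr rfl fun p hp =>
    congrArg _ (hg.sum_mul_self_apply_of_pOff hab (mem_filter.1 hp).2), sum_const,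
    card_filter_spBlock_eq, nsmul_eq_mul]
  field_simp
  push_cast
  ring

end IsSpOrthonormalBasis

theorem structure_constant_Aabab_a_general (k : Fin 3 → ℕ)
    (a b : Fin 3) (hab : a ≠ b)
    {ι κ : Type} [Fintype ι] [DecidableEq ι] [Fintype κ] [DecidableEq κ]
    (f : ι → Matrix (Fin (blockTotal k) ⊕ Fin (blockTotal k))
      (Fin (blockTotal k) ⊕ Fin (blockTotal k)) ℂ)
    (e : κ → Matrix (Fin (blockTotal k) ⊕ Fin (blockTotal k))
      (Fin (blockTotal k) ⊕ Fin (blockTotal k)) ℂ)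
    (hf : ∀ i, f i ∈ pOff k a b)
    (hfspan : ∀ Z ∈ pOff k a b, Z ∈ Submodule.span ℝ (Set.range f))
    (hfonb : ∀ i j, spInner k (f i) (f j) = if i = j then 1 else 0)
    (he : ∀ i, e i ∈ pDiag k a)
    (hespan : ∀ Z ∈ pDiag k a, Z ∈ Submodule.span ℝ (Set.range e))
    (heonb : ∀ i j, spInner k (e i) (e j) = if i = j then 1 else 0) :
    ∑ i : ι, ∑ j : ι, ∑ γ : κ, (spInner k (f i * f j - f j * f i) (e γ)) ^ 2
      = (k a : ℂ) * (k b : ℂ) * (2 * (k a : ℂ) + 1) / ((blockTotal k : ℂ) + 1) := by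
  have hfB : IsSpOrthonormalBasis k {(a, b), (b, a)} f := ⟨hf, hfspan, hfonb⟩
  have heB : IsSpOrthonormalBasis k {(a, a)} e := ⟨he, hespan, heonb⟩
  have hN : (blockTotal k : ℂ) + 1 ≠ 0 := Nat.cast_add_one_ne_zero _
  calc ∑ i, ∑ j, ∑ γ, spInner k (f i * f j - f j * f i) (e γ) ^ 2
      = ∑ i, ∑ γ, 4 * ((blockTotal k : ℂ) + 1) * trace (e γ * e γ * (f i * f i)) := by
        refine sum_congr rfl fun i _ => ?_
        rw [sum_comm]
        refine sum_congr rfl fun γ _ => ?_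
        rw [hfB.sum_sq_spInner_commutator _ _ (commutator_mem_pOff (he γ) (hf i)),
          spInner_commutator_self_of_mem_pDiag_of_mem_pOff hab (he γ) (hf i)]
    _ = 4 * ((blockTotal k : ℂ) + 1) * trace ((∑ γ, e γ * e γ) * ∑ i, f i * f i) := by
        simp only [Finset.mul_sum, Finset.sum_mul, trace_sum]
    _ = _ := by
        rw [heB.trace_sum_mul_self_mul_sum_mul_self hab hfB]
        field_simp

/-- **Lemma 3.2 (the structure constant `A_{(ab)(ab)a}`).**  Let `a ≠ b`, let `{f_i}` be any
orthonormal basis of `p_{ab}` and `{e_γ}` any orthonormal basis of `p_a`, with respect to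
`⟨·,·⟩ = −B`.  Then `Σ_{i,j,γ} ⟨[f_i, f_j], e_γ⟩² = k_a k_b (2 k_a + 1)/(n + 1)`. -/
theorem structure_constant_Aabab_a (k : Fin 3 → ℕ) (hk : ∀ a, 1 ≤ k a)
    (a b : Fin 3) (hab : a ≠ b)
    {ι κ : Type} [Fintype ι] [DecidableEq ι] [Fintype κ] [DecidableEq κ]
    (f : ι → Matrix (Fin (blockTotal k) ⊕ Fin (blockTotal k))
      (Fin (blockTotal k) ⊕ Fin (blockTotal k)) ℂ)
    (e : κ → Matrix (Fin (blockTotal k) ⊕ Fin (blockTotal k))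
      (Fin (blockTotal k) ⊕ Fin (blockTotal k)) ℂ)
    (hf : ∀ i, f i ∈ pOff k a b)
    (hfspan : ∀ Z ∈ pOff k a b, Z ∈ Submodule.span ℝ (Set.range f))
    (hfonb : ∀ i j, spInner k (f i) (f j) = if i = j then 1 else 0)
    (he : ∀ i, e i ∈ pDiag k a)
    (hespan : ∀ Z ∈ pDiag k a, Z ∈ Submodule.span ℝ (Set.range e))
    (heonb : ∀ i j, spInner k (e i) (e j) = if i = j then 1 else 0) :
    ∑ i : ι, ∑ j : ι, ∑ γ : κ, (spInner k (f i * f j - f j * f i) (e γ)) ^ 2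
      = (k a : ℂ) * (k b : ℂ) * (2 * (k a : ℂ) + 1) / ((blockTotal k : ℂ) + 1) :=
  structure_constant_Aabab_a_general k a b hab f e hf hfspan hfonb he hespan heonb
end

section
/- For all real numbers n, p with p ≥ 1 and 3n ≥ 4p, the following quantity is positive: u(n,p) = 160000n⁶p² − 160000n⁶p + 640000n⁶ − 403200n⁵p³ + 230400n⁵p² − 2376000n⁵p + 2548800n⁵ − 214784n⁴p⁴ + 582912n⁴p³ + 2333952n⁴p² − 7877504n⁴p + 3695424n⁴ + 1771264n³p⁵ − 927296n³p⁴ + 827840n³p³ + 8098416n³p² − 10284688n³p + 2114464n³ − 2423104n²p⁶ − 388160n²p⁵ − 2433056n²p⁴ − 1950896n²p³ + 9653884n²p² − 5443832n²p + 135164n² + 1436864np⁷ + 1036416np⁶ + 1028576np⁵ − 1683360np⁴ − 3395380np³ + 4423856np² − 652556np − 194416n − 327184p⁸ − 375232p⁷ − 23080p⁶ + 859256p⁵ + 313895p⁴ − 1100766p³ + 477967p² + 177080p − 1936 > 0. -/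
/-- The polynomial `u(n, p)` from the proof of Theorem 4.2, with
`U₁(1/5) = −(64/390625)·u(n, p)`. -/
noncomputable def uPoly (n p : ℝ) : ℝ :=
  160000*n^6*p^2 - 160000*n^6*p + 640000*n^6 - 403200*n^5*p^3 + 230400*n^5*p^2
    - 2376000*n^5*p + 2548800*n^5 - 214784*n^4*p^4 + 582912*n^4*p^3
    + 2333952*n^4*p^2 - 7877504*n^4*p + 3695424*n^4 + 1771264*n^3*p^5
    - 927296*n^3*p^4 + 827840*n^3*p^3 + 8098416*n^3*p^2 - 10284688*n^3*p
    + 2114464*n^3 - 2423104*n^2*p^6 - 388160*n^2*p^5 - 2433056*n^2*p^4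
    - 1950896*n^2*p^3 + 9653884*n^2*p^2 - 5443832*n^2*p + 135164*n^2
    + 1436864*n*p^7 + 1036416*n*p^6 + 1028576*n*p^5 - 1683360*n*p^4
    - 3395380*n*p^3 + 4423856*n*p^2 - 652556*n*p - 194416*n - 327184*p^8
    - 375232*p^7 - 23080*p^6 + 859256*p^5 + 313895*p^4 - 1100766*p^3
    + 477967*p^2 + 177080*p - 1936

/-- **Positivity of `u(n, p)`** (proof of Theorem 4.2).  For all real `n, p` with `p ≥ 1`
and `3n ≥ 4p`, one has `u(n, p) > 0`; consequently `U₁(1/5) < 0`. -/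
theorem uPoly_pos (n p : ℝ) (hp : 1 ≤ p) (hnp : 4 * p ≤ 3 * n) :
    0 < uPoly n p := by
  set a : ℝ := 3*n - 4*p with hadef
  set b : ℝ := p - 1 with hbdef
  have ha : (0:ℝ) ≤ a := by simp [hadef]; linarith
  have hb : (0:ℝ) ≤ b := by simp [hbdef]; linarith
  have key : 729 * uPoly n p = 226720000*a^0*b^0 + 1346634400*a^0*b^1 + 2544006511*a^0*b^2 + 2243118686*a^0*b^3 + 1125415871*a^0*b^4 + 419186312*a^0*b^5 + 137956504*a^0*b^6 + 26954176*a^0*b^7 + 383344*a^0*b^8 + 1235040000*a^1*b^0 + 4212462600*a^1*b^1 + 5166843036*a^1*b^2 + 3145793028*a^1*b^3 + 1273949952*a^1*b^4 + 494697696*a^1*b^5 + 144311616*a^1*b^6 + 14434368*a^1*b^7 + 1466430000*a^2*b^0 + 3315298800*a^2*b^1 + 2684607276*a^2*b^2 + 1130031120*a^2*b^3 + 466463712*a^2*b^4 + 193523520*a^2*b^5 + 32300736*a^2*b^6 + 649280000*a^3*b^0 + 980951600*a^3*b^1 + 488961296*a^3*b^2 + 177530432*a^3*b^3 + 105490496*a^3*b^4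 + 28159232*a^3*b^5 + 140280000*a^4*b^0 + 137232000*a^4*b^1 + 47705856*a^4*b^2 + 29769984*a^4*b^3 + 12274944*a^4*b^4 + 15360000*a^5*b^0 + 9825600*a^5*b^1 + 4742400*a^5*b^2 + 2630400*a^5*b^3 + 640000*a^6*b^0 + 160000*a^6*b^1 + 160000*a^6*b^2 := by
    simp only [uPoly, hadef, hbdef]; ring
  have h1 : (0:ℝ) ≤ a^0*b^1 := mul_nonneg (pow_nonneg ha 0) (pow_nonneg hb 1)
  have h2 : (0:ℝ) ≤ a^0*b^2 := mul_nonneg (pow_nonneg ha 0) (pow_nonneg hb 2)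
  have h3 : (0:ℝ) ≤ a^0*b^3 := mul_nonneg (pow_nonneg ha 0) (pow_nonneg hb 3)
  have h4 : (0:ℝ) ≤ a^0*b^4 := mul_nonneg (pow_nonneg ha 0) (pow_nonneg hb 4)
  have h5 : (0:ℝ) ≤ a^0*b^5 := mul_nonneg (pow_nonneg ha 0) (pow_nonneg hb 5)
  have h6 : (0:ℝ) ≤ a^0*b^6 := mul_nonneg (pow_nonneg ha 0) (pow_nonneg hb 6)
  have h7 : (0:ℝ) ≤ a^0*b^7 := mul_nonneg (pow_nonneg ha 0) (pow_nonneg hb 7)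
  have h8 : (0:ℝ) ≤ a^0*b^8 := mul_nonneg (pow_nonneg ha 0) (pow_nonneg hb 8)
  have h9 : (0:ℝ) ≤ a^1*b^0 := mul_nonneg (pow_nonneg ha 1) (pow_nonneg hb 0)
  have h10 : (0:ℝ) ≤ a^1*b^1 := mul_nonneg (pow_nonneg ha 1) (pow_nonneg hb 1)
  have h11 : (0:ℝ) ≤ a^1*b^2 := mul_nonneg (pow_nonneg ha 1) (pow_nonneg hb 2)
  have h12 : (0:ℝ) ≤ a^1*b^3 := mul_nonneg (pow_nonneg ha 1) (pow_nonneg hb 3)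
  have h13 : (0:ℝ) ≤ a^1*b^4 := mul_nonneg (pow_nonneg ha 1) (pow_nonneg hb 4)
  have h14 : (0:ℝ) ≤ a^1*b^5 := mul_nonneg (pow_nonneg ha 1) (pow_nonneg hb 5)
  have h15 : (0:ℝ) ≤ a^1*b^6 := mul_nonneg (pow_nonneg ha 1) (pow_nonneg hb 6)
  have h16 : (0:ℝ) ≤ a^1*b^7 := mul_nonneg (pow_nonneg ha 1) (pow_nonneg hb 7)
  have h17 : (0:ℝ) ≤ a^2*b^0 := mul_nonneg (pow_nonneg ha 2) (pow_nonneg hb 0)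
  have h18 : (0:ℝ) ≤ a^2*b^1 := mul_nonneg (pow_nonneg ha 2) (pow_nonneg hb 1)
  have h19 : (0:ℝ) ≤ a^2*b^2 := mul_nonneg (pow_nonneg ha 2) (pow_nonneg hb 2)
  have h20 : (0:ℝ) ≤ a^2*b^3 := mul_nonneg (pow_nonneg ha 2) (pow_nonneg hb 3)
  have h21 : (0:ℝ) ≤ a^2*b^4 := mul_nonneg (pow_nonneg ha 2) (pow_nonneg hb 4)
  have h22 : (0:ℝ) ≤ a^2*b^5 := mul_nonneg (pow_nonneg ha 2) (pow_nonneg hb 5)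
  have h23 : (0:ℝ) ≤ a^2*b^6 := mul_nonneg (pow_nonneg ha 2) (pow_nonneg hb 6)
  have h24 : (0:ℝ) ≤ a^3*b^0 := mul_nonneg (pow_nonneg ha 3) (pow_nonneg hb 0)
  have h25 : (0:ℝ) ≤ a^3*b^1 := mul_nonneg (pow_nonneg ha 3) (pow_nonneg hb 1)
  have h26 : (0:ℝ) ≤ a^3*b^2 := mul_nonneg (pow_nonneg ha 3) (pow_nonneg hb 2)
  have h27 : (0:ℝ) ≤ a^3*b^3 := mul_nonneg (pow_nonneg ha 3) (pow_nonneg hb 3)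
  have h28 : (0:ℝ) ≤ a^3*b^4 := mul_nonneg (pow_nonneg ha 3) (pow_nonneg hb 4)
  have h29 : (0:ℝ) ≤ a^3*b^5 := mul_nonneg (pow_nonneg ha 3) (pow_nonneg hb 5)
  have h30 : (0:ℝ) ≤ a^4*b^0 := mul_nonneg (pow_nonneg ha 4) (pow_nonneg hb 0)
  have h31 : (0:ℝ) ≤ a^4*b^1 := mul_nonneg (pow_nonneg ha 4) (pow_nonneg hb 1)
  have h32 : (0:ℝ) ≤ a^4*b^2 := mul_nonneg (pow_nonneg ha 4) (pow_nonneg hb 2)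
  have h33 : (0:ℝ) ≤ a^4*b^3 := mul_nonneg (pow_nonneg ha 4) (pow_nonneg hb 3)
  have h34 : (0:ℝ) ≤ a^4*b^4 := mul_nonneg (pow_nonneg ha 4) (pow_nonneg hb 4)
  have h35 : (0:ℝ) ≤ a^5*b^0 := mul_nonneg (pow_nonneg ha 5) (pow_nonneg hb 0)
  have h36 : (0:ℝ) ≤ a^5*b^1 := mul_nonneg (pow_nonneg ha 5) (pow_nonneg hb 1)
  have h37 : (0:ℝ) ≤ a^5*b^2 := mul_nonneg (pow_nonneg ha 5) (pow_nonneg hb 2)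
  have h38 : (0:ℝ) ≤ a^5*b^3 := mul_nonneg (pow_nonneg ha 5) (pow_nonneg hb 3)
  have h39 : (0:ℝ) ≤ a^6*b^0 := mul_nonneg (pow_nonneg ha 6) (pow_nonneg hb 0)
  have h40 : (0:ℝ) ≤ a^6*b^1 := mul_nonneg (pow_nonneg ha 6) (pow_nonneg hb 1)
  have h41 : (0:ℝ) ≤ a^6*b^2 := mul_nonneg (pow_nonneg ha 6) (pow_nonneg hb 2)
  linarith [key]
end
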